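/- arXiv:1910.14200 — 10 statements merged into one kernel-verified Lean document; each statement's English description precedes it below -/
import Mathlib

section
/- For every graph G, the surrounding cop number satisfies σ(G) ≥ δ(G), the minimum degree of G. -/
/-! Surrounding Cops and Robbers.

Game state: positions of the `k` cops (`Fin k → V`) and of the robber (`V`),
with the cops to move.  On the cops' turn each cop may stay or move along an
edge; the cops win immediately if every neighbour of the robber's vertex is
occupied by a cop.  Otherwise the robber must stay or move along an edge,
ending on a vertex not occupied by any cop (in particular, if a cop lands on
the robber's vertex he is compelled to move off it).  `CopsWin` is the least
fixed point expressing that the cops can force a win in finitely many moves. -/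

namespace SurroundGame

variable {V : Type*} (G : SimpleGraph V)

/-- One legal simultaneous move of the cops: each cop stays or moves along an edge. -/
def CopsMove {k : ℕ} (c c' : Fin k → V) : Prop :=
  ∀ i, c' i = c i ∨ G.Adj (c i) (c' i)

/-- One legal move of the robber (ignoring cop positions): stay or move along an edge. -/
def RobberMove (r r' : V) : Prop :=
  r' = r ∨ G.Adj r r'

/-- The robber at `r` is surrounded: every neighbour of `r` is occupied by a cop. -/
def Surrounded {k : ℕ} (c : Fin k → V) (r : V) : Prop :=
  ∀ w, G.Adj r w → ∃ i, c i = w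

/-- With cops at `c`, robber at `r` and the cops to move, the cops can force a win:
they make a legal move after which either the robber is surrounded, or every legal
robber response (to a vertex free of cops) leads to a position where they again win. -/
inductive CopsWin : {k : ℕ} → (Fin k → V) → V → Prop
  | surround {k : ℕ} (c : Fin k → V) (r : V) (c' : Fin k → V)
      (hmove : CopsMove G c c')
      (hsur : Surrounded G c' r) :
      CopsWin c r
  | step {k : ℕ} (c : Fin k → V) (r : V) (c' : Fin k → V)
      (hmove : CopsMove G c c')
      (hnext : ∀ r', RobberMove G r r' → (∀ i, c' i ≠ r') → CopsWin c' r') :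
      CopsWin c r

/-- `k` cops have a winning strategy on `G`: they have an initial placement such that
whatever starting vertex (unoccupied by cops) the robber picks, the cops win. -/
def CopsWinWith (k : ℕ) : Prop :=
  ∃ c : Fin k → V, ∀ r : V, (∀ i, c i ≠ r) → CopsWin G c r

/-- The surrounding cop number: the least number of cops with a winning strategy. -/
noncomputable def surroundNumber : ℕ :=
  sInf {k | CopsWinWith G k}

end SurroundGame


open SurroundGame

lemma copsWin_minDegree_le {V : Type*} [Fintype V] (G : SimpleGraph V)
    [DecidableRel G.Adj] {k : ℕ} {c : Fin k → V} {r : V}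
    (h : CopsWin G c r) : G.minDegree ≤ k := by
  have := Classical.decEq V
  induction h with
  | surround c r c' hmove hsur =>
      have hsub : G.neighborFinset r ⊆ Finset.univ.image c' := by
        intro w hw
        obtain ⟨i, hi⟩ := hsur w ((SimpleGraph.mem_neighborFinset G r w).mp hw)
        exact Finset.mem_image.mpr ⟨i, Finset.mem_univ i, hi⟩
      calc G.minDegree ≤ G.degree r := G.minDegree_le_degree r
        _ = (G.neighborFinset r).card := rfl
        _ ≤ (Finset.univ.image c').card := Finset.card_le_card hsub
        _ ≤ (Finset.univ : Finset (Fin k)).card := Finset.card_image_le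
        _ = k := by simp
  | step c r c' hmove hnext ih =>
      by_contra hlt
      push_neg at hlt
      have hdeg : k < G.degree r := lt_of_lt_of_le hlt (G.minDegree_le_degree r)
      -- robber's options: r and its neighbours; cops occupy at most k vertices
      have hcard : (Finset.univ.image c').card < (insert r (G.neighborFinset r)).card := by
        have h1 : (Finset.univ.image c').card ≤ k := by
          calc (Finset.univ.image c').card ≤ (Finset.univ : Finset (Fin k)).card :=
                Finset.card_image_le
            _ = k := by simp
        have h2 : (insert r (G.neighborFinset r)).card = G.degree r + 1 := by
          rw [Finset.card_insert_of_notMem (by simp)]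
          rfl
        omega
      obtain ⟨r', hr'mem, hr'free⟩ : ∃ r' ∈ insert r (G.neighborFinset r),
          r' ∉ Finset.univ.image c' := by
        by_contra hno
        push_neg at hno
        exact absurd (Finset.card_le_card hno) (not_le.mpr hcard)
      have hmove' : RobberMove G r r' := by
        rcases Finset.mem_insert.mp hr'mem with h | h
        · exact Or.inl h
        · exact Or.inr ((SimpleGraph.mem_neighborFinset G r r').mp h)
      have hfree : ∀ i, c' i ≠ r' := fun i hi =>
        hr'free (Finset.mem_image.mpr ⟨i, Finset.mem_univ i, hi⟩)
      exact absurd (ih r' hmove' hfree) (not_le.mpr hlt)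

/-- The surrounding cop number is at least the minimum degree. -/
theorem minDegree_le_surroundNumber {V : Type*} [Fintype V] (G : SimpleGraph V)
    [DecidableRel G.Adj] :
    G.minDegree ≤ surroundNumber G := by
  have := Classical.decEq V
  refine le_csInf ?_ ?_
  · -- all-vertices placement wins (robber has no start vertex), or V is empty
    by_cases hV : Nonempty V
    · obtain ⟨e⟩ := Fintype.truncEquivFin V
      exact ⟨Fintype.card V, fun v => e.symm v, fun r hr =>
        absurd (e.symm_apply_apply r) (hr (e r))⟩
    · exact ⟨0, Fin.elim0, fun r _ => (hV ⟨r⟩).elim⟩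
  · rintro k ⟨c, hc⟩
    by_cases hfree : ∃ r : V, ∀ i, c i ≠ r
    · obtain ⟨r, hr⟩ := hfree
      exact copsWin_minDegree_le G (hc r hr)
    · -- cops occupy every vertex, so k ≥ |V| > minDegree
      push_neg at hfree
      have hsurj : Function.Surjective c := by
        intro v
        obtain ⟨i, hi⟩ := hfree v
        exact ⟨i, hi⟩
      have hcard : Fintype.card V ≤ k := by
        simpa using Fintype.card_le_of_surjective c hsurj
      by_cases hV : Nonempty V
      · obtain ⟨v⟩ := hV
        exact le_trans (le_of_lt (lt_of_le_of_lt (G.minDegree_le_degree v)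
          (G.degree_lt_card_verts v))) hcard
      · have : Fintype.card V = 0 :=
          Fintype.card_eq_zero_iff.mpr (not_nonempty_iff.mp hV)
        have hmd : G.minDegree = 0 := by
          unfold SimpleGraph.minDegree
          simp [Finset.univ_eq_empty_iff.2 (not_nonempty_iff.mp hV)]
        omega
end

section
/- For every graph G, the surrounding cop number satisfies σ(G) ≥ ω(G) − 1, where ω(G) is the clique number. (Robber strategy: stay within a maximum clique; if a cop lands on his vertex, move to another vacant clique vertex.) -/
open SurroundGame

lemma exists_free {V : Type*} {S T : Finset V} (h : T.card < S.card) :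
    ∃ r ∈ S, r ∉ T := by
  by_contra hcon
  push_neg at hcon
  exact absurd (Finset.card_le_card hcon) (by omega)

lemma no_win_big_clique {V : Type*} (G : SimpleGraph V) :
    ∀ {k : ℕ} (c : Fin k → V) (r : V), CopsWin G c r →
      ∀ S : Finset V, G.IsClique S → k + 2 ≤ S.card → r ∈ S → False := by
  classical
  intro k c r h
  induction h with
  | surround c r c' hmove hsur =>
    intro S hS hcard hr
    have hsub : S.erase r ⊆ Finset.univ.image c' := by
      intro w hw
      have hw' := Finset.mem_erase.mp hw
      obtain ⟨i, hi⟩ := hsur w (hS hr hw'.2 (Ne.symm hw'.1))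
      exact Finset.mem_image.mpr ⟨i, Finset.mem_univ i, hi⟩
    have h0 := Finset.card_le_card hsub
    have h1 : (S.erase r).card = S.card - 1 := Finset.card_erase_of_mem hr
    have h2 : (Finset.univ.image c').card ≤ k := by
      have := Finset.card_image_le (s := (Finset.univ : Finset (Fin _))) (f := c')
      simpa using this
    omega
  | step c r c' hmove hnext ih =>
    intro S hS hcard hr
    have h2 : (Finset.univ.image c').card < S.card := by
      have := Finset.card_image_le (s := (Finset.univ : Finset (Fin _))) (f := c')
      simp only [Finset.card_univ, Fintype.card_fin] at this
      omega
    obtain ⟨r', hr'S, hr'⟩ := exists_free h2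
    have hfree : ∀ i, c' i ≠ r' := fun i hi =>
      hr' (Finset.mem_image.mpr ⟨i, Finset.mem_univ i, hi⟩)
    have hmoveR : RobberMove G r r' := by
      by_cases hrr : r' = r
      · exact Or.inl hrr
      · exact Or.inr (hS hr hr'S (Ne.symm hrr))
    exact ih r' hmoveR hfree S hS hcard hr'S

/-- The surrounding cop number is at least the clique number minus one. -/
theorem cliqueNum_sub_one_le_surroundNumber {V : Type*} [Fintype V] (G : SimpleGraph V) :
    G.cliqueNum - 1 ≤ surroundNumber G := by
  classical
  have hmem : CopsWinWith G (Fintype.card V) := by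
    refine ⟨fun i => (Fintype.equivFin V).symm i, fun r hr => ?_⟩
    exact absurd ((Fintype.equivFin V).symm_apply_apply r) (hr _)
  have hsInf : surroundNumber G ∈ {k | CopsWinWith G k} :=
    Nat.sInf_mem ⟨_, hmem⟩
  obtain ⟨c, hc⟩ := hsInf
  by_contra hlt
  push_neg at hlt
  obtain ⟨S, hSc, hScard⟩ := G.exists_isNClique_cliqueNum
  have hcard : surroundNumber G + 2 ≤ S.card := by omega
  have hSne : S.Nonempty := Finset.card_pos.mp (by omega)
  -- find a starting vertex for the robber in S not occupied by cops
  have h2 : (Finset.univ.image c).card < S.card := by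
    have := Finset.card_image_le (s := (Finset.univ : Finset (Fin _))) (f := c)
    simp only [Finset.card_univ, Fintype.card_fin] at this
    omega
  obtain ⟨r, hrS, hr⟩ := exists_free h2
  have hfree : ∀ i, c i ≠ r := fun i hi =>
    hr (Finset.mem_image.mpr ⟨i, Finset.mem_univ i, hi⟩)
  exact no_win_big_clique G c r (hc r hfree) S hSc hcard hrS
end

section
/- For 2 ≤ m ≤ n, the surrounding cop number of the complete bipartite graph K_{m,n} equals m. -/
open SurroundGame

lemma exists_unoccupied {k n : ℕ} {β : Type*} [DecidableEq β] (f : Fin k → β)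
    (g : Fin n → β) (hg : Function.Injective g) (h : k < n) : ∃ b, ∀ i, f i ≠ g b := by
  by_contra h'
  push_neg at h'
  choose i hi using h'
  have hinj : Function.Injective i := by
    intro a b hab
    apply hg
    rw [← hi a, ← hi b, hab]
  have := Fintype.card_le_of_injective i hinj
  simp at this; omega

lemma not_copsWin {m n k : ℕ} (hk : k < m) (hkn : k < n) :
    ∀ (c : Fin k → (Fin m ⊕ Fin n)) (r : Fin m ⊕ Fin n),
      ¬ CopsWin (completeBipartiteGraph (Fin m) (Fin n)) c r := by
  intro c r h
  induction h with
  | surround c r c' hmove hsur =>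
    cases r with
    | inl a =>
      obtain ⟨b, hb⟩ := exists_unoccupied c' (Sum.inr : Fin n → _) Sum.inr_injective hkn
      obtain ⟨i, hi⟩ := hsur (Sum.inr b) (by simp)
      exact hb i hi
    | inr b =>
      obtain ⟨a, ha⟩ := exists_unoccupied c' (Sum.inl : Fin m → _) Sum.inl_injective hk
      obtain ⟨i, hi⟩ := hsur (Sum.inl a) (by simp)
      exact ha i hi
  | step c r c' hmove hnext ih =>
    cases r with
    | inl a =>
      obtain ⟨b, hb⟩ := exists_unoccupied c' (Sum.inr : Fin n → _) Sum.inr_injective hkn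
      exact ih (Sum.inr b) (Or.inr (by simp)) hb
    | inr b =>
      obtain ⟨a, ha⟩ := exists_unoccupied c' (Sum.inl : Fin m → _) Sum.inl_injective hk
      exact ih (Sum.inl a) (Or.inr (by simp)) ha


/-- For `2 ≤ m ≤ n`, the surrounding cop number of `K_{m,n}` is `m`. -/
theorem surroundNumber_completeBipartite (m n : ℕ) (hm : 2 ≤ m) (hmn : m ≤ n) :
    surroundNumber (completeBipartiteGraph (Fin m) (Fin n)) = m := by
  have hwin : CopsWinWith (completeBipartiteGraph (Fin m) (Fin n)) m := by
    refine ⟨Sum.inl, fun r hr => ?_⟩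
    cases r with
    | inl a => exact absurd rfl (hr a)
    | inr b =>
      refine CopsWin.surround _ _ Sum.inl (fun i => Or.inl rfl) (fun w hw => ?_)
      cases w with
      | inl a => exact ⟨a, rfl⟩
      | inr b' => simp at hw
  refine le_antisymm (Nat.sInf_le hwin) (le_csInf ⟨m, hwin⟩ fun k hk => ?_)
  by_contra hlt
  push_neg at hlt
  obtain ⟨c, hc⟩ := hk
  obtain ⟨a, ha⟩ := exists_unoccupied c (Sum.inl : Fin m → _) Sum.inl_injective hlt
  exact not_copsWin hlt (lt_of_lt_of_le hlt hmn) c (Sum.inl a) (hc _ ha)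
end

section
/- If G is a tree that is neither a single vertex nor a star K_{1,m}, then σ(G) = 2. -/
open SurroundGame

section Aux

open SimpleGraph

variable {V : Type*} {G : SimpleGraph V}

/-- Vertices reachable from `r` by a walk avoiding `x`. -/
def Cset (G : SimpleGraph V) (x r : V) : Set V := {v | ∃ p : G.Walk r v, x ∉ p.support}

lemma self_mem_Cset {x r : V} (h : r ≠ x) : r ∈ Cset G x r :=
  ⟨SimpleGraph.Walk.nil, by simp [Ne.symm h]⟩

lemma not_mem_Cset_self {y r : V} : y ∉ Cset G y r :=
  fun ⟨p, hp⟩ => hp p.end_mem_support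

lemma Cset_move {x r r' : V} (hadj : G.Adj r r') (h : r ≠ x) (h' : r' ≠ x) :
    Cset G x r = Cset G x r' := by
  ext v
  constructor
  · rintro ⟨p, hp⟩
    exact ⟨SimpleGraph.Walk.cons hadj.symm p, by simp [hp, Ne.symm h']⟩
  · rintro ⟨p, hp⟩
    exact ⟨SimpleGraph.Walk.cons hadj p, by simp [hp, Ne.symm h]⟩

lemma Cset_subset {a x y : V} (h : ∀ q : G.Walk a x, y ∈ q.support) :
    Cset G y a ⊆ Cset G x a := by
  letI := Classical.decEq V
  rintro v ⟨p, hp⟩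
  refine ⟨p, fun hx => hp ?_⟩
  exact p.support_takeUntil_subset hx (h (p.takeUntil x hx))

lemma walks_through (hG : G.IsAcyclic) {a x y : V} (P : G.Walk a x) (hP : P.IsPath)
    (hy : y ∈ P.support) (w : G.Walk a x) : y ∈ w.support := by
  classical
  have h : w.bypass = P := congrArg Subtype.val
    (hG.path_unique ⟨w.bypass, w.bypass_isPath⟩ ⟨P, hP⟩)
  exact w.support_bypass_subset (h ▸ hy)

/-- Main induction: two cops, the front cop `c0` separating the robber into the
territory `Cset G c0 r`, the back cop `c1` adjacent (or equal) to `c0`. -/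
lemma tree_main [Fintype V] (htree : G.IsTree) :
    ∀ (n : ℕ) (c0 c1 r : V), (c1 = c0 ∨ G.Adj c1 c0) → r ≠ c0 →
      (Cset G c0 r).ncard ≤ n → CopsWin G ![c0, c1] r := by
  intro n
  induction n with
  | zero =>
    intro c0 c1 r _ hr hn
    have h1 : 0 < (Cset G c0 r).ncard :=
      (Set.ncard_pos (Set.toFinite _)).mpr ⟨r, self_mem_Cset hr⟩
    omega
  | succ n IH =>
    intro c0 c1 r hc1 hr hn
    obtain ⟨w⟩ := htree.isConnected.preconnected c0 r
    classical
    rcases hbp : w.bypass with _ | @⟨_, y, _, hadj, q⟩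
    · exact absurd rfl hr.symm
    · have hpath : (SimpleGraph.Walk.cons hadj q).IsPath := hbp ▸ w.bypass_isPath
      have hq : q.IsPath ∧ c0 ∉ q.support := (SimpleGraph.Walk.cons_isPath_iff _ _).mp hpath
      have hyC : y ∈ Cset G c0 r :=
        ⟨q.reverse, by simpa [SimpleGraph.Walk.support_reverse] using hq.2⟩
      have hsep : ∀ ww : G.Walk r c0, y ∈ ww.support := fun ww =>
        walks_through htree.IsAcyclic (SimpleGraph.Walk.cons hadj q).reverse hpath.reverse
          (by simp [SimpleGraph.Walk.support_reverse, q.start_mem_support]) ww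
      refine CopsWin.step _ _ ![y, c0] ?_ ?_
      · intro i
        fin_cases i
        · simp only [Matrix.cons_val_zero]
          exact Or.inr hadj
        · simp only [Matrix.cons_val_one, Matrix.head_cons]
          rcases hc1 with h | h
          · exact Or.inl h.symm
          · exact Or.inr h
      · intro r' hrm hfree
        have hy' : y ≠ r' := by simpa using hfree 0
        have hc0' : c0 ≠ r' := by simpa using hfree 1
        have hQ : Cset G y r' ⊂ Cset G c0 r := by
          by_cases hyr : y = r
          · subst hyr
            have hadjr : G.Adj y r' := by
              rcases hrm with rfl | h
              · exact absurd rfl hy'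
              · exact h
            have hsep2 : ∀ ww : G.Walk r' c0, y ∈ ww.support := by
              intro ww
              have hP : (SimpleGraph.Walk.cons hadjr.symm
                  (SimpleGraph.Walk.cons hadj.symm SimpleGraph.Walk.nil) :
                    G.Walk r' c0).IsPath := by
                simp only [SimpleGraph.Walk.isPath_def, SimpleGraph.Walk.support_cons,
                  SimpleGraph.Walk.support_nil]
                simp [List.nodup_cons, Ne.symm hy', Ne.symm hc0', hr]
              exact walks_through htree.IsAcyclic _ hP (by simp) ww
            have hsub : Cset G y r' ⊆ Cset G c0 y := by
              have h1 : Cset G y r' ⊆ Cset G c0 r' := Cset_subset hsep2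
              have h2 : Cset G c0 r' = Cset G c0 y := (Cset_move hadjr hr (Ne.symm hc0')).symm
              rw [h2] at h1
              exact h1
            exact (Set.ssubset_iff_of_subset hsub).mpr
              ⟨y, self_mem_Cset hr, not_mem_Cset_self⟩
          · have heq : Cset G y r' = Cset G y r := by
              rcases hrm with rfl | h
              · rfl
              · exact (Cset_move h (fun hh => hyr hh.symm) (Ne.symm hy')).symm
            rw [heq]
            exact (Set.ssubset_iff_of_subset (Cset_subset hsep)).mpr
              ⟨y, hyC, not_mem_Cset_self⟩
        have hlt : (Cset G y r').ncard < (Cset G c0 r).ncard :=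
          Set.ncard_lt_ncard hQ (Set.toFinite _)
        exact IH y c0 r' (Or.inr hadj) (Ne.symm hy') (by omega)

lemma two_cops_win [Fintype V] (htree : G.IsTree) (hcard : 1 < Fintype.card V) :
    CopsWinWith G 2 := by
  have : Nonempty V := Fintype.card_pos_iff.mp (by omega)
  obtain ⟨v⟩ := this
  refine ⟨![v, v], fun r hfree => ?_⟩
  have hr : r ≠ v := Ne.symm (by simpa using hfree 0)
  exact tree_main htree _ v v r (Or.inl rfl) hr le_rfl

lemma no_inv {b c a d : V} (hbc : G.Adj b c) (hba : G.Adj b a) (hac : a ≠ c)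
    (hcd : G.Adj c d) (hdb : d ≠ b) :
    ∀ {k : ℕ} (cps : Fin k → V) (r : V), CopsWin G cps r → k ≤ 1 →
      (r = b ∨ r = c) → (∀ i, cps i ≠ r) → False := by
  intro k cps r h
  induction h with
  | surround cps r c' hmove hsur =>
    intro hk hrbc _
    have hsame : ∀ i j : Fin k, c' i = c' j := by
      intro i j
      have hi := i.isLt
      have hj := j.isLt
      have : i = j := Fin.ext (by omega)
      rw [this]
    rcases hrbc with rfl | rfl
    · obtain ⟨i, hi⟩ := hsur c hbc
      obtain ⟨j, hj⟩ := hsur a hba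
      exact hac (by rw [← hj, hsame j i, hi])
    · obtain ⟨i, hi⟩ := hsur b hbc.symm
      obtain ⟨j, hj⟩ := hsur d hcd
      exact hdb (by rw [← hj, hsame j i, hi])
  | step cps r c' hmove hnext IH =>
    intro hk hrbc hfree
    by_cases hocc : ∀ i, c' i ≠ r
    · exact IH r (Or.inl rfl) hocc hk hrbc hocc
    · push_neg at hocc
      obtain ⟨i0, hi0⟩ := hocc
      have hall : ∀ i, c' i = r := by
        intro i
        have hi := i.isLt
        have hj := i0.isLt
        have : i = i0 := Fin.ext (by omega)
        rw [this, hi0]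
      rcases hrbc with rfl | rfl
      · have hfr : ∀ i, c' i ≠ c := fun i => by rw [hall i]; exact hbc.ne
        exact IH c (Or.inr hbc) hfr hk (Or.inr rfl) hfr
      · have hfr : ∀ i, c' i ≠ b := fun i => by rw [hall i]; exact hbc.ne'
        exact IH b (Or.inr hbc.symm) hfr hk (Or.inl rfl) hfr

lemma few_cops_lose {b c a d : V} (hbc : G.Adj b c) (hba : G.Adj b a) (hac : a ≠ c)
    (hcd : G.Adj c d) (hdb : d ≠ b) {k : ℕ} (hk : k ≤ 1) : ¬ CopsWinWith G k := by
  rintro ⟨cps, hw⟩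
  by_cases hb : ∀ i, cps i ≠ b
  · exact no_inv hbc hba hac hcd hdb cps b (hw b hb) hk (Or.inl rfl) hb
  · push_neg at hb
    obtain ⟨i0, hi0⟩ := hb
    have hall : ∀ i, cps i = b := by
      intro i
      have hi := i.isLt
      have hj := i0.isLt
      have : i = i0 := Fin.ext (by omega)
      rw [this, hi0]
    have hfr : ∀ i, cps i ≠ c := fun i => by rw [hall i]; exact hbc.ne
    exact no_inv hbc hba hac hcd hdb cps c (hw c hfr) hk (Or.inr rfl) hfr

/-- From a connected non-star graph on at least two vertices, extract an edge whose
two endpoints each have another neighbour. -/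
lemma exists_inner_edge [Fintype V] (hconn : G.Connected) (hcard : 1 < Fintype.card V)
    (hstar : ¬ ∃ v : V, ∀ w : V, w ≠ v → G.Adj v w) :
    ∃ b c a d : V, G.Adj b c ∧ G.Adj b a ∧ a ≠ c ∧ G.Adj c d ∧ d ≠ b := by
  classical
  -- helper: a path of length two out of w towards a non-neighbour
  have hpath2 : ∀ w z : V, z ≠ w → ¬ G.Adj w z →
      ∃ s t : V, G.Adj w s ∧ G.Adj s t ∧ t ≠ w := by
    intro w z hzw hnadj
    obtain ⟨p0⟩ := hconn.preconnected w z
    have hp := p0.bypass_isPath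
    rcases hbp : p0.bypass with _ | @⟨_, s, _, h1, q⟩
    · exact absurd rfl hzw.symm
    · rw [hbp] at hp
      rcases hq : q with _ | @⟨_, t, _, h2, q2⟩
      · exact absurd h1 hnadj
      · refine ⟨s, t, h1, h2, ?_⟩
        rw [hq] at hp
        have h3 := ((SimpleGraph.Walk.cons_isPath_iff _ _).mp hp).2
        intro hteq
        apply h3
        subst hteq
        rw [SimpleGraph.Walk.support_cons]
        exact List.mem_cons_of_mem _ q2.start_mem_support
  by_contra hnP
  push_neg at hnP
  have hPneg : ∀ b c : V, G.Adj b c →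
      (∀ a, G.Adj b a → a = c) ∨ (∀ d, G.Adj c d → d = b) := by
    intro b c hbc
    by_contra hcon
    push_neg at hcon
    obtain ⟨⟨a, hba, hac⟩, ⟨d, hcd, hdb⟩⟩ := hcon
    exact hdb (hnP b c a d hbc hba hac hcd)
  -- helper: if v's neighbourhood is exactly {w}, then w is a star centre
  have hcentre : ∀ v w : V, G.Adj v w → (∀ a, G.Adj v a → a = w) →
      ∀ z : V, z ≠ w → G.Adj w z := by
    intro v w hvw hv z hz
    by_contra hnadj
    obtain ⟨s, t, hws, hst, htw⟩ := hpath2 w z hz hnadj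
    rcases hPneg w s hws with h | h
    · have hvs : v = s := h v hvw.symm
      have : t = w := hv t (by rw [hvs]; exact hst)
      exact htw this
    · exact htw (h t hst)
  -- get an edge
  obtain ⟨u, v0, huv⟩ := Fintype.exists_pair_of_one_lt_card hcard
  obtain ⟨p0⟩ := hconn.preconnected u v0
  have hp := p0.bypass_isPath
  obtain ⟨x, y, hxy⟩ : ∃ x y : V, G.Adj x y := by
    rcases hbp : p0.bypass with _ | @⟨_, s, _, h1, q⟩
    · exact absurd rfl huv
    · exact ⟨u, s, h1⟩
  rcases hPneg x y hxy with h | h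
  · exact hstar ⟨y, hcentre x y hxy h⟩
  · exact hstar ⟨x, hcentre y x hxy.symm h⟩

end Aux

/-- A tree which is neither a single vertex nor a star has surrounding cop
number `2`.  (A star is a tree with a vertex adjacent to all other vertices.) -/
theorem surroundNumber_tree {V : Type*} [Fintype V] (G : SimpleGraph V)
    (htree : G.IsTree) (hcard : 1 < Fintype.card V)
    (hstar : ¬ ∃ v : V, ∀ w : V, w ≠ v → G.Adj v w) :
    surroundNumber G = 2 := by
  obtain ⟨b, c, a, d, hbc, hba, hac, hcd, hdb⟩ :=
    exists_inner_edge htree.isConnected hcard hstar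
  have h2 : CopsWinWith G 2 := two_cops_win htree hcard
  have hlow : ∀ k : ℕ, k ≤ 1 → ¬ CopsWinWith G k :=
    fun k hk => few_cops_lose hbc hba hac hcd hdb hk
  have hne : {k | CopsWinWith G k}.Nonempty := ⟨2, h2⟩
  have hmem : sInf {k | CopsWinWith G k} ∈ {k | CopsWinWith G k} := Nat.sInf_mem hne
  have hle : sInf {k | CopsWinWith G k} ≤ 2 := Nat.sInf_le h2
  rcases Nat.lt_or_ge (sInf {k | CopsWinWith G k}) 2 with hlt | hge
  · exact absurd hmem (hlow _ (by omega))
  · unfold surroundNumber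
    omega
end

section
/- If G is the wheel graph obtained by joining a new vertex to every vertex of a cycle C_{n−1} (n ≥ 5), then σ(G) = 3. -/
open SurroundGame

/-- The wheel graph: a cycle `C_m` together with a universal vertex (`none`). -/
def wheelGraph (m : ℕ) : SimpleGraph (Option (Fin m)) :=
  SimpleGraph.fromRel (fun x y =>
    x = none ∨ ∃ i j, x = some i ∧ y = some j ∧ (SimpleGraph.cycleGraph m).Adj i j)

/-! Every vertex of a wheel with at least four vertices has three or more neighbours, so
against fewer than three cops the robber always has an unoccupied neighbour to step to and
is never surrounded. Three cops win: one sits on the hub for good, and the other two close in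
on the robber along the rim from both sides. The number of rim steps from one rim cop past the
robber to the other drops with every cop move and is never increased by the robber, who
cannot slip past a cop; once both rim cops are adjacent to him he is surrounded. -/

theorem encard_range_fin_le {α : Type*} {k : ℕ} (c : Fin k → α) :
    (Set.range c).encard ≤ k := by
  simpa [← Set.image_univ] using Set.encard_image_le c Set.univ

namespace SurroundGame

variable {V : Type*} {G : SimpleGraph V}

theorem surrounded_iff_neighborSet_subset_range {k : ℕ} {c : Fin k → V} {r : V} :
    Surrounded G c r ↔ G.neighborSet r ⊆ Set.range c :=
  Iff.rfl

theorem exists_adj_forall_ne_of_lt_encard {k : ℕ} (c : Fin k → V) {v : V}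
    (h : (k : ℕ∞) < (G.neighborSet v).encard) : ∃ w, G.Adj v w ∧ ∀ i, c i ≠ w := by
  by_contra! hall
  have hsub : G.neighborSet v ⊆ Set.range c := hall
  exact h.not_ge ((Set.encard_le_encard hsub).trans (encard_range_fin_le c))

theorem CopsWin.le_of_forall_le_encard_neighborSet {d : ℕ}
    (hdeg : ∀ v, (d : ℕ∞) ≤ (G.neighborSet v).encard) {k : ℕ} {c : Fin k → V} {r : V}
    (h : CopsWin G c r) : d ≤ k := by
  induction h with
  | surround c r c' _ hsur =>
    have hsub := surrounded_iff_neighborSet_subset_range.mp hsur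
    exact_mod_cast (hdeg r).trans ((Set.encard_le_encard hsub).trans (encard_range_fin_le c'))
  | step c r c' _ _ ih =>
    by_contra! hk
    obtain ⟨w, hadj, hfree⟩ :=
      exists_adj_forall_ne_of_lt_encard c' ((Nat.cast_lt.mpr hk).trans_le (hdeg r))
    exact hk.not_ge (ih w (Or.inr hadj) hfree)

theorem le_of_copsWinWith [Nonempty V] {d : ℕ}
    (hdeg : ∀ v, (d : ℕ∞) ≤ (G.neighborSet v).encard) {k : ℕ} (h : CopsWinWith G k) :
    d ≤ k := by
  by_contra! hk
  obtain ⟨c, hc⟩ := h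
  obtain ⟨w, -, hfree⟩ := exists_adj_forall_ne_of_lt_encard c
    ((Nat.cast_lt.mpr hk).trans_le (hdeg (Classical.arbitrary V)))
  exact hk.not_ge ((hc w hfree).le_of_forall_le_encard_neighborSet hdeg)

theorem surroundNumber_eq_of_copsWinWith [Nonempty V] {d : ℕ}
    (hdeg : ∀ v, (d : ℕ∞) ≤ (G.neighborSet v).encard) (hwin : CopsWinWith G d) :
    surroundNumber G = d :=
  IsLeast.csInf_eq ⟨hwin, fun _ hk => le_of_copsWinWith hdeg hk⟩

end SurroundGame

section Wheel

open SimpleGraph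

theorem wheelGraph_neighborSet_none (m : ℕ) :
    (wheelGraph m).neighborSet none = Set.range some := by
  ext (_ | j) <;> simp [wheelGraph]

theorem wheelGraph_neighborSet_some {m : ℕ} (i : Fin m) :
    (wheelGraph m).neighborSet (some i) = insert none (some '' (cycleGraph m).neighborSet i) := by
  ext (_ | j)
  · simp [wheelGraph]
  · simpa [wheelGraph, adj_comm _ j i] using Adj.ne

theorem wheelGraph_neighborSet_some_eq_triple {m : ℕ} (i : Fin (m + 2)) :
    (wheelGraph (m + 2)).neighborSet (some i) = {none, some (i - 1), some (i + 1)} := by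
  rw [wheelGraph_neighborSet_some, cycleGraph_neighborSet, Set.image_pair]

theorem wheelGraph_adj_some_add_one {m : ℕ} (i : Fin (m + 2)) :
    (wheelGraph (m + 2)).Adj (some i) (some (i + 1)) := by
  rw [← mem_neighborSet, wheelGraph_neighborSet_some_eq_triple]
  simp

theorem three_le_encard_neighborSet_wheelGraph {m : ℕ} (v : Option (Fin (m + 3))) :
    3 ≤ ((wheelGraph (m + 3)).neighborSet v).encard := by
  cases v with
  | none =>
    rw [wheelGraph_neighborSet_none]
    refine le_trans ?_ (Option.some_injective _).encard_range
    simp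
  | some i =>
    have hne : i - 1 ≠ i + 1 := by
      simp [sub_eq_iff_eq_add, add_assoc, Fin.ext_iff, Fin.val_add, Nat.mod_eq_of_lt]
    rw [wheelGraph_neighborSet_some_eq_triple, Set.encard_eq_three.mpr]
    exact ⟨_, _, _, by simp, by simp, by simpa using hne, rfl⟩

end Wheel

section Pincer

open SurroundGame Fin.CommRing

variable {m : ℕ}

/-- Cops on the hub and `i` steps behind and `j` steps ahead of the robber at `r`; measuring
the offsets in `ℕ` keeps the chase free of modular arithmetic. -/
def pincer (r : Fin (m + 2)) (i j : ℕ) : Fin 3 → Option (Fin (m + 2)) :=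
  ![none, some (r - (i : Fin (m + 2))), some (r + (j : Fin (m + 2)))]

theorem pincer_congr {r s : Fin (m + 2)} {i j i' j' : ℕ}
    (hi : s - (i' : Fin (m + 2)) = r - i) (hj : s + (j' : Fin (m + 2)) = r + j) :
    pincer s i' j' = pincer r i j := by
  simp only [pincer, hi, hj]

theorem surrounded_pincer_one_one (r : Fin (m + 2)) :
    Surrounded (wheelGraph (m + 2)) (pincer r 1 1) (some r) := by
  rw [surrounded_iff_neighborSet_subset_range, wheelGraph_neighborSet_some_eq_triple]
  rintro _ (rfl | rfl | rfl)
  exacts [⟨0, rfl⟩, ⟨1, by simp [pincer]⟩, ⟨2, by simp [pincer]⟩]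

theorem copsMove_pincer_succ_left (r : Fin (m + 2)) (i j : ℕ) :
    CopsMove (wheelGraph (m + 2)) (pincer r (i + 1) j) (pincer r i j) := by
  intro k
  fin_cases k
  · exact Or.inl rfl
  · right
    show (wheelGraph (m + 2)).Adj (some (r - ((i + 1 : ℕ) : Fin (m + 2))))
      (some (r - (i : Fin (m + 2))))
    convert wheelGraph_adj_some_add_one _ using 2
    push_cast; ring
  · exact Or.inl rfl

theorem copsMove_pincer_succ_right (r : Fin (m + 2)) (i j : ℕ) :
    CopsMove (wheelGraph (m + 2)) (pincer r i (j + 1)) (pincer r i j) := by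
  intro k
  fin_cases k
  · exact Or.inl rfl
  · exact Or.inl rfl
  · right
    show (wheelGraph (m + 2)).Adj (some (r + ((j + 1 : ℕ) : Fin (m + 2))))
      (some (r + (j : Fin (m + 2))))
    convert (wheelGraph_adj_some_add_one (r + (j : Fin (m + 2)))).symm using 2
    push_cast; ring

theorem exists_pincer_eq_of_robberMove {r : Fin (m + 2)} {i j : ℕ} {v : Option (Fin (m + 2))}
    (hi : 1 ≤ i) (hj : 1 ≤ j) (hmove : RobberMove (wheelGraph (m + 2)) (some r) v)
    (hfree : ∀ k, pincer r i j k ≠ v) :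
    ∃ s i' j', v = some s ∧ 1 ≤ i' ∧ 1 ≤ j' ∧ i' + j' = i + j ∧
      pincer s i' j' = pincer r i j := by
  have hv : v = some r ∨ v ∈ ({none, some (r - 1), some (r + 1)} : Set _) := by
    rw [← wheelGraph_neighborSet_some_eq_triple]
    exact hmove
  rcases hv with rfl | rfl | rfl | rfl
  · exact ⟨r, i, j, rfl, hi, hj, rfl, rfl⟩
  · exact absurd rfl (hfree 0)
  · obtain ⟨i', rfl⟩ : ∃ i', i = i' + 2 := by
      have : i ≠ 1 := by rintro rfl; exact hfree 1 (by simp [pincer])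
      exact ⟨i - 2, by omega⟩
    exact ⟨r - 1, i' + 1, j + 1, rfl, by omega, by omega, by omega,
      pincer_congr (by push_cast; ring) (by push_cast; ring)⟩
  · obtain ⟨j', rfl⟩ : ∃ j', j = j' + 2 := by
      have : j ≠ 1 := by rintro rfl; exact hfree 2 (by simp [pincer])
      exact ⟨j - 2, by omega⟩
    exact ⟨r + 1, i + 1, j' + 1, rfl, by omega, by omega, by omega,
      pincer_congr (by push_cast; ring) (by push_cast; ring)⟩

theorem exists_copsMove_pincer {r : Fin (m + 2)} {i j : ℕ} (hi : 1 ≤ i) (hj : 1 ≤ j)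
    (h : 2 ≤ i ∨ 2 ≤ j) :
    ∃ i' j', 1 ≤ i' ∧ 1 ≤ j' ∧ i' + j' < i + j ∧
      CopsMove (wheelGraph (m + 2)) (pincer r i j) (pincer r i' j') := by
  rcases h with h | h
  · obtain ⟨i', rfl⟩ := Nat.exists_eq_add_of_le' h
    exact ⟨i' + 1, j, by omega, hj, by omega, copsMove_pincer_succ_left r (i' + 1) j⟩
  · obtain ⟨j', rfl⟩ := Nat.exists_eq_add_of_le' h
    exact ⟨i, j' + 1, hi, by omega, by omega, copsMove_pincer_succ_right r i (j' + 1)⟩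

theorem copsWin_pincer (r : Fin (m + 2)) {i j : ℕ} (hi : 1 ≤ i) (hj : 1 ≤ j) :
    CopsWin (wheelGraph (m + 2)) (pincer r i j) (some r) := by
  induction hn : i + j using Nat.strong_induction_on generalizing r i j with
  | _ n ih =>
  rcases (by omega : (i = 1 ∧ j = 1) ∨ 2 ≤ i ∨ 2 ≤ j) with ⟨rfl, rfl⟩ | h
  · exact .surround _ _ _ (fun _ => Or.inl rfl) (surrounded_pincer_one_one r)
  obtain ⟨i', j', hi', hj', hlt, hcops⟩ := exists_copsMove_pincer (r := r) hi hj h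
  refine .step _ _ _ hcops fun v hmove hfree => ?_
  obtain ⟨s, i'', j'', rfl, hi'', hj'', hsum, hpincer⟩ :=
    exists_pincer_eq_of_robberMove hi' hj' hmove hfree
  rw [← hpincer]
  exact ih _ (by omega) s hi'' hj'' rfl

theorem copsWinWith_wheelGraph_three : CopsWinWith (wheelGraph (m + 2)) 3 := by
  refine ⟨![none, some 0, some 0], fun v hv => ?_⟩
  cases v with
  | none => exact absurd rfl (hv 0)
  | some r =>
    have hr : r ≠ 0 := fun h => hv 1 (by simp [h])
    have hstart : pincer r r.val (m + 2 - r.val) = ![none, some 0, some 0] := by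
      simp [pincer, Nat.cast_sub r.isLt.le]
    rw [← hstart]
    exact copsWin_pincer r (Nat.one_le_iff_ne_zero.mpr (Fin.val_ne_zero_iff.mpr hr)) (by omega)

end Pincer

/-- The wheel on `n ≥ 5` vertices (a universal vertex joined to `C_{n-1}`) has
surrounding cop number `3`. -/
theorem surroundNumber_wheel (n : ℕ) (hn : 5 ≤ n) :
    surroundNumber (wheelGraph (n - 1)) = 3 := by
  obtain ⟨m, rfl⟩ : ∃ m, n = m + 4 := ⟨n - 4, by omega⟩
  exact surroundNumber_eq_of_copsWinWith three_le_encard_neighborSet_wheelGraph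
    copsWinWith_wheelGraph_three
end

section
/- If H is a retract of G, then σ(H) ≤ σ(G). -/
open SurroundGame

lemma copsWin_retract {V W : Type*} (G : SimpleGraph V) (H : SimpleGraph W)
    (ι : H →g G) (f : G →g H) (hretract : ∀ w : W, f (ι w) = w)
    {k : ℕ} (c : Fin k → V) (v : V) (hw : CopsWin G c v) :
    ∀ r : W, v = ι r → CopsWin H (f ∘ c) r := by
  induction hw with
  | surround c v c' hmove hsur =>
    intro r hv
    refine CopsWin.surround _ _ (f ∘ c') (fun i => ?_) (fun w hw => ?_)
    · rcases hmove i with h | h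
      · exact Or.inl (by simp [h])
      · exact Or.inr (f.map_adj h)
    · obtain ⟨i, hi⟩ := hsur (ι w) (by rw [hv] at *; exact ι.map_adj hw)
      exact ⟨i, by simp [hi, hretract]⟩
  | step c v c' hmove hnext ih =>
    intro r hv
    refine CopsWin.step _ _ (f ∘ c') (fun i => ?_) (fun r' hr' hfree => ?_)
    · rcases hmove i with h | h
      · exact Or.inl (by simp [h])
      · exact Or.inr (f.map_adj h)
    · have hmv : RobberMove G v (ι r') := by
        rcases hr' with h | h
        · exact Or.inl (by rw [h, hv])
        · exact Or.inr (hv ▸ ι.map_adj h)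
      have hfree' : ∀ i, c' i ≠ ι r' := by
        intro i hi
        exact hfree i (by simp [hi, hretract])
      exact ih (ι r') hmv hfree' r' rfl

/-- If `H` is a retract of `G` (there are homomorphisms `ι : H → G` and
`f : G → H` with `f ∘ ι = id`), then `σ(H) ≤ σ(G)`. -/
theorem surroundNumber_retract {V W : Type*} [Fintype V] [Fintype W]
    (G : SimpleGraph V) (H : SimpleGraph W)
    (ι : H →g G) (f : G →g H) (hretract : ∀ w : W, f (ι w) = w) :
    surroundNumber H ≤ surroundNumber G := by
  have hsub : {k | CopsWinWith G k} ⊆ {k | CopsWinWith H k} := by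
    intro k hk
    obtain ⟨c, hc⟩ := hk
    refine ⟨f ∘ c, fun r hr => ?_⟩
    have hvr : ∀ i, c i ≠ ι r := fun i hi => hr i (by simp [hi, hretract])
    exact copsWin_retract G H ι f hretract c (ι r) (hc (ι r) hvr) r rfl
  have hne : {k | CopsWinWith G k}.Nonempty := by
    refine ⟨Fintype.card V, ?_⟩
    classical
    rcases isEmpty_or_nonempty V with hV | hV
    · haveI : IsEmpty (Fin (Fintype.card V)) := by
        rw [Fintype.card_eq_zero]; exact Fin.isEmpty
      exact ⟨isEmptyElim, fun r => isEmptyElim r⟩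
    · set e := Fintype.equivFin V
      exact ⟨e.symm, fun r hr => absurd (e.symm_apply_apply r) (hr (e r))⟩
  exact csInf_le_csInf (OrderBot.bddBelow _) hne hsub
end

section
/- If G has girth at least 7 and minimum degree δ ≥ 3, then σ(G) ≥ δ + 1. -/
open SurroundGame

namespace SurroundProof
open SimpleGraph Finset SurroundGame
set_option linter.unusedSectionVars false

open SimpleGraph Finset

variable {V : Type*} {G : SimpleGraph V}

lemma noC (h7 : (7:ℕ∞) ≤ G.egirth) {a : V} (w : G.Walk a a) (hw : w.IsCycle)
    (hl : w.length ≤ 6) : False := by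
  have := (SimpleGraph.le_egirth.mp h7) a w hw
  have : (7:ℕ∞) ≤ (6:ℕ∞) := this.trans (by exact_mod_cast Nat.cast_le.mpr hl)
  norm_num at this

lemma noC3 (h7 : (7:ℕ∞) ≤ G.egirth) {a b c : V}
    (h1 : G.Adj a b) (h2 : G.Adj b c) (h3 : G.Adj c a) : False := by
  refine noC h7 (.cons h1 (.cons h2 (.cons h3 .nil))) ?_ (by simp)
  rw [Walk.isCycle_def, Walk.isTrail_def]
  refine ⟨?_, by simp, ?_⟩
  · simp [Sym2.eq_iff, h1.ne, h2.ne, h3.ne, h1.ne', h2.ne', h3.ne']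
  · simp [h1.ne', h2.ne, h3.ne]

lemma noC4 (h7 : (7:ℕ∞) ≤ G.egirth) {a b c d : V}
    (h1 : G.Adj a b) (h2 : G.Adj b c) (h3 : G.Adj c d) (h4 : G.Adj d a)
    (hac : a ≠ c) (hbd : b ≠ d) : False := by
  refine noC h7 (.cons h1 (.cons h2 (.cons h3 (.cons h4 .nil)))) ?_ (by simp)
  rw [Walk.isCycle_def, Walk.isTrail_def]
  refine ⟨?_, by simp, ?_⟩
  · simp [Sym2.eq_iff, h1.ne, h2.ne, h3.ne, h4.ne, h1.ne', h2.ne', h3.ne', h4.ne', hac, hbd,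
      hac.symm, hbd.symm]
  · simp [h1.ne', h2.ne, h3.ne, h4.ne, hbd, hac.symm]

lemma noC5 (h7 : (7:ℕ∞) ≤ G.egirth) {a b c d e : V}
    (h1 : G.Adj a b) (h2 : G.Adj b c) (h3 : G.Adj c d) (h4 : G.Adj d e) (h5 : G.Adj e a)
    (hac : a ≠ c) (had : a ≠ d) (hbd : b ≠ d) (hbe : b ≠ e) (hce : c ≠ e) : False := by
  refine noC h7 (.cons h1 (.cons h2 (.cons h3 (.cons h4 (.cons h5 .nil))))) ?_ (by simp)
  rw [Walk.isCycle_def, Walk.isTrail_def]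
  refine ⟨?_, by simp, ?_⟩
  · simp [Sym2.eq_iff, h1.ne, h2.ne, h3.ne, h4.ne, h5.ne, h1.ne', h2.ne', h3.ne', h4.ne', h5.ne',
      hac, had, hbd, hbe, hce, hac.symm, had.symm, hbd.symm, hbe.symm, hce.symm]
  · simp [h1.ne', h2.ne, h3.ne, h4.ne, h5.ne, hbd, hbe, hce, hac.symm, had.symm]

lemma noC6 (h7 : (7:ℕ∞) ≤ G.egirth) {a b c d e f : V}
    (h1 : G.Adj a b) (h2 : G.Adj b c) (h3 : G.Adj c d) (h4 : G.Adj d e) (h5 : G.Adj e f)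
    (h6 : G.Adj f a)
    (hac : a ≠ c) (had : a ≠ d) (hae : a ≠ e) (hbd : b ≠ d) (hbe : b ≠ e) (hbf : b ≠ f)
    (hce : c ≠ e) (hcf : c ≠ f) (hdf : d ≠ f) : False := by
  refine noC h7 (.cons h1 (.cons h2 (.cons h3 (.cons h4 (.cons h5 (.cons h6 .nil)))))) ?_
    (by simp)
  rw [Walk.isCycle_def, Walk.isTrail_def]
  refine ⟨?_, by simp, ?_⟩
  · simp [Sym2.eq_iff, h1.ne, h2.ne, h3.ne, h4.ne, h5.ne, h6.ne, h1.ne', h2.ne', h3.ne', h4.ne',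
      h5.ne', h6.ne', hac, had, hae, hbd, hbe, hbf, hce, hcf, hdf,
      hac.symm, had.symm, hae.symm, hbd.symm, hbe.symm, hbf.symm, hce.symm, hcf.symm, hdf.symm]
  · simp [h1.ne', h2.ne, h3.ne, h4.ne, h5.ne, h6.ne, hbd, hbe, hbf, hce, hcf, hdf, hac.symm,
      had.symm, hae.symm]

/-- Collision of two "child tokens" of a common vertex `u`. -/
lemma collideXX (h7 : (7:ℕ∞) ≤ G.egirth) {u x₁ x₂ p : V}
    (hux₁ : G.Adj u x₁) (hux₂ : G.Adj u x₂) (h12 : x₁ ≠ x₂) (hpu : p ≠ u)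
    (s₁ : p = x₁ ∨ G.Adj x₁ p) (s₂ : p = x₂ ∨ G.Adj x₂ p) : False := by
  rcases s₁ with rfl | h1
  · rcases s₂ with rfl | h2
    · exact h12 rfl
    · exact noC3 h7 hux₁ h2.symm hux₂.symm
  · rcases s₂ with rfl | h2
    · exact noC3 h7 hux₂ h1.symm hux₁.symm
    · exact noC4 h7 hux₁ h1 h2.symm hux₂.symm hpu.symm h12

/-- Collision of two tokens belonging to distinct neighbours `v₁ v₂` of `r`. -/
lemma collideAA (h7 : (7:ℕ∞) ≤ G.egirth) {r v₁ v₂ p : V}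
    (h1 : G.Adj r v₁) (h2 : G.Adj r v₂) (h12 : v₁ ≠ v₂)
    (s₁ : p = v₁ ∨ ∃ x, G.Adj v₁ x ∧ x ≠ r ∧ (p = x ∨ G.Adj x p))
    (s₂ : p = v₂ ∨ ∃ x, G.Adj v₂ x ∧ x ≠ r ∧ (p = x ∨ G.Adj x p)) : False := by
  rcases s₁ with rfl | ⟨x₁, hv₁x₁, hx₁r, t₁⟩
  · rcases s₂ with h | ⟨x₂, hv₂x₂, hx₂r, t₂⟩
    · exact h12 h
    · rcases t₂ with h | h
      · exact noC3 h7 h1 (h ▸ hv₂x₂).symm h2.symm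
      · exact noC4 h7 h1 h.symm hv₂x₂.symm h2.symm hx₂r.symm h12
  · rcases s₂ with rfl | ⟨x₂, hv₂x₂, hx₂r, t₂⟩
    · rcases t₁ with h | h
      · exact noC3 h7 h2 (h ▸ hv₁x₁).symm h1.symm
      · exact noC4 h7 h2 h.symm hv₁x₁.symm h1.symm hx₁r.symm h12.symm
    · have hx12 : x₁ ≠ x₂ := by
        rintro rfl
        exact noC4 h7 h1 hv₁x₁ hv₂x₂.symm h2.symm hx₁r.symm h12
      have hv₁x₂ : v₁ ≠ x₂ := by
        rintro rfl
        exact noC3 h7 h1 hv₂x₂.symm h2.symm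
      have hx₁v₂ : x₁ ≠ v₂ := by
        rintro rfl
        exact noC3 h7 h2 hv₁x₁.symm h1.symm
      rcases t₁ with rfl | hx₁p
      · rcases t₂ with h | h
        · exact hx12 h
        · -- h : Adj x₂ p  (p plays role of x₁)
          exact noC5 h7 h1 hv₁x₁ h.symm hv₂x₂.symm h2.symm hx₁r.symm hx₂r.symm hv₁x₂ h12 hx₁v₂
      · rcases t₂ with rfl | hx₂p
        · exact noC5 h7 h1 hv₁x₁ hx₁p hv₂x₂.symm h2.symm hx₁r.symm hx₂r.symm hv₁x₂ h12 hx₁v₂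
        · have hrp : r ≠ p := by
            rintro rfl
            exact noC3 h7 h1 hv₁x₁ hx₁p
          have hv₁p : v₁ ≠ p := by
            rintro rfl
            exact noC4 h7 h1 hx₂p.symm hv₂x₂.symm h2.symm hx₂r.symm h12
          have hpv₂ : p ≠ v₂ := by
            rintro rfl
            exact noC4 h7 h1 hv₁x₁ hx₁p h2.symm hx₁r.symm h12
          exact noC6 h7 h1 hv₁x₁ hx₁p hx₂p.symm hv₂x₂.symm h2.symm
            hx₁r.symm hrp hx₂r.symm hv₁p hv₁x₂ h12 hx12 hx₁v₂ hpv₂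

/-- Collision of an `A`-token (neighbour `v₁` of `r`) with an `X`-token (child `v₂` of `u`). -/
lemma collideAX (h7 : (7:ℕ∞) ≤ G.egirth) {r u v₁ v₂ p : V}
    (hru : G.Adj r u) (hrv₁ : G.Adj r v₁) (hv₁u : v₁ ≠ u)
    (huv₂ : G.Adj u v₂) (hv₂r : v₂ ≠ r) (h12 : v₁ ≠ v₂) (hpu : p ≠ u)
    (s₁ : p = v₁ ∨ ∃ x, G.Adj v₁ x ∧ x ≠ r ∧ (p = x ∨ G.Adj x p))
    (s₂ : p = v₂ ∨ G.Adj v₂ p) : False := by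
  rcases s₁ with rfl | ⟨x₁, hv₁x₁, hx₁r, t₁⟩
  · rcases s₂ with h | hadj
    · exact h12 h
    · exact noC4 h7 hrv₁ hadj.symm huv₂.symm hru.symm hv₂r.symm hv₁u
  · have hx₁u : x₁ ≠ u := by
      rintro rfl
      exact noC3 h7 hrv₁ hv₁x₁ hru.symm
    have hx₁v₂ : x₁ ≠ v₂ := by
      rintro rfl
      exact noC4 h7 hrv₁ hv₁x₁ huv₂.symm hru.symm hx₁r.symm hv₁u
    rcases s₂ with rfl | hadj₂
    · rcases t₁ with h | h
      · exact hx₁v₂ (h.symm ▸ rfl)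
      · exact noC5 h7 hrv₁ hv₁x₁ h huv₂.symm hru.symm hx₁r.symm hv₂r.symm h12 hv₁u hx₁u
    · rcases t₁ with rfl | hx₁p
      · -- p = x₁
        exact noC5 h7 hrv₁ hv₁x₁ hadj₂.symm huv₂.symm hru.symm hx₁r.symm hv₂r.symm h12 hv₁u hx₁u
      · have hrp : r ≠ p := by
          rintro rfl
          exact noC3 h7 hru huv₂ hadj₂
        have hv₁p : v₁ ≠ p := by
          rintro rfl
          exact noC4 h7 hrv₁ hadj₂.symm huv₂.symm hru.symm hv₂r.symm hv₁u
        exact noC6 h7 hrv₁ hv₁x₁ hx₁p hadj₂.symm huv₂.symm hru.symm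
          hx₁r.symm hrp hv₂r.symm hv₁p h12 hv₁u hx₁v₂ hx₁u hpu

def Inv (G : SimpleGraph V) {k : ℕ} (c : Fin k → V) (r : V) : Prop :=
  ∃ u, G.Adj r u ∧ ∀ i, c i ≠ u ∧ ¬ G.Adj u (c i)

variable [Fintype V] [DecidableRel G.Adj]

lemma maintain (h7 : (7:ℕ∞) ≤ G.egirth) (hδ : 3 ≤ G.minDegree) {k : ℕ}
    (hk : k ≤ G.minDegree) {c c' : Fin k → V} {r : V}
    (hW : Inv G c r) (hmove : CopsMove G c c') :
    ∃ r', RobberMove G r r' ∧ (∀ i, c' i ≠ r') ∧ Inv G c' r' := by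
  classical
  obtain ⟨u, hru, hfree⟩ := hW
  have huOcc : ∀ i, c' i ≠ u := by
    intro i h
    rcases hmove i with h' | h'
    · exact (hfree i).1 (h'.symm.trans h)
    · exact (hfree i).2 (h ▸ h').symm
  by_contra hno
  push_neg at hno
  have block : ∀ v, G.Adj r v → (∀ i, c' i ≠ v) →
      ∀ x, G.Adj v x → ∃ i, c' i = x ∨ G.Adj x (c' i) := by
    intro v hrv hunocc x hvx
    have hni := hno v (Or.inr hrv) hunocc
    rw [Inv] at hni
    push_neg at hni
    obtain ⟨i, hi⟩ := hni x hvx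
    by_cases h : c' i = x
    · exact ⟨i, Or.inl h⟩
    · exact ⟨i, Or.inr (hi h)⟩
  set A : Finset V := (G.neighborFinset r).erase u with hA
  set X : Finset V := (G.neighborFinset u).erase r with hX
  have hmemA : ∀ v ∈ A, G.Adj r v ∧ v ≠ u := by
    intro v hv
    rw [hA, Finset.mem_erase, mem_neighborFinset] at hv
    exact ⟨hv.2, hv.1⟩
  have hmemX : ∀ v ∈ X, G.Adj u v ∧ v ≠ r := by
    intro v hv
    rw [hX, Finset.mem_erase, mem_neighborFinset] at hv
    exact ⟨hv.2, hv.1⟩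
  have hdisj : Disjoint A X := by
    rw [Finset.disjoint_left]
    intro v hvA hvX
    exact noC3 h7 hru (hmemX v hvX).1 (hmemA v hvA).1.symm
  have hAcard : A.card = G.degree r - 1 := by
    rw [hA, Finset.card_erase_of_mem (by rw [mem_neighborFinset]; exact hru)]
    rfl
  have hXcard : X.card = G.degree u - 1 := by
    rw [hX, Finset.card_erase_of_mem (by rw [mem_neighborFinset]; exact hru.symm)]
    rfl
  have hdr : G.minDegree ≤ G.degree r := G.minDegree_le_degree r
  have hdu : G.minDegree ≤ G.degree u := G.minDegree_le_degree u
  have hcard : (Finset.univ : Finset (Fin k)).card < (A ∪ X).card := by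
    rw [Finset.card_union_of_disjoint hdisj, Finset.card_univ, Fintype.card_fin, hAcard, hXcard]
    omega
  have key : ∀ v ∈ A ∪ X, ∃ i : Fin k,
      (v ∈ X ∧ (c' i = v ∨ G.Adj v (c' i))) ∨
      (v ∈ A ∧ (c' i = v ∨ ∃ x, G.Adj v x ∧ x ≠ r ∧ (c' i = x ∨ G.Adj x (c' i)))) := by
    intro v hv
    rcases Finset.mem_union.mp hv with hvA | hvX
    · obtain ⟨hrv, hvu⟩ := hmemA v hvA
      by_cases hocc : ∃ i, c' i = v
      · obtain ⟨i, hi⟩ := hocc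
        exact ⟨i, Or.inr ⟨hvA, Or.inl hi⟩⟩
      · push_neg at hocc
        have hx : ((G.neighborFinset v).erase r).Nonempty := by
          rw [← Finset.card_pos, Finset.card_erase_of_mem
            (by rw [mem_neighborFinset]; exact hrv.symm), card_neighborFinset_eq_degree]
          have := G.minDegree_le_degree v
          omega
        obtain ⟨x, hxmem⟩ := hx
        rw [Finset.mem_erase, mem_neighborFinset] at hxmem
        obtain ⟨i, hi⟩ := block v hrv hocc x hxmem.2
        exact ⟨i, Or.inr ⟨hvA, Or.inr ⟨x, hxmem.2, hxmem.1, hi⟩⟩⟩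
    · obtain ⟨huv, hvr⟩ := hmemX v hvX
      obtain ⟨i, hi⟩ := block u hru huOcc v huv
      exact ⟨i, Or.inl ⟨hvX, hi⟩⟩
  have hne : (A ∪ X).Nonempty := Finset.card_pos.mp (by omega)
  obtain ⟨v₀, hv₀⟩ := hne
  obtain ⟨i₀, _⟩ := key v₀ hv₀
  set f : V → Fin k := fun v => if h : v ∈ A ∪ X then (key v h).choose else i₀ with hf
  have hfspec : ∀ v (h : v ∈ A ∪ X),
      (v ∈ X ∧ (c' (f v) = v ∨ G.Adj v (c' (f v)))) ∨
      (v ∈ A ∧ (c' (f v) = v ∨ ∃ x, G.Adj v x ∧ x ≠ r ∧ (c' (f v) = x ∨ G.Adj x (c' (f v))))) := by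
    intro v h
    rw [hf]
    simp only [dif_pos h]
    exact (key v h).choose_spec
  obtain ⟨v₁, hv₁, v₂, hv₂, hvne, heq⟩ :=
    Finset.exists_ne_map_eq_of_card_lt_of_maps_to hcard (fun a _ => Finset.mem_univ (f a))
  have q₁ := hfspec v₁ hv₁
  have q₂ := hfspec v₂ hv₂
  rw [heq] at q₁
  set i := f v₂
  have hpu : c' i ≠ u := huOcc i
  rcases q₁ with ⟨hm₁, s₁⟩ | ⟨hm₁, s₁⟩ <;> rcases q₂ with ⟨hm₂, s₂⟩ | ⟨hm₂, s₂⟩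
  · exact collideXX h7 (hmemX v₁ hm₁).1 (hmemX v₂ hm₂).1 hvne hpu s₁ s₂
  · exact collideAX h7 hru (hmemA v₂ hm₂).1 (hmemA v₂ hm₂).2 (hmemX v₁ hm₁).1
      (hmemX v₁ hm₁).2 hvne.symm hpu s₂ s₁
  · exact collideAX h7 hru (hmemA v₁ hm₁).1 (hmemA v₁ hm₁).2 (hmemX v₂ hm₂).1
      (hmemX v₂ hm₂).2 hvne hpu s₁ s₂
  · exact collideAA h7 (hmemA v₁ hm₁).1 (hmemA v₂ hm₂).1 hvne s₁ s₂

lemma robber_escapes (h7 : (7:ℕ∞) ≤ G.egirth) (hδ : 3 ≤ G.minDegree) {k : ℕ}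
    {c : Fin k → V} {r : V} (hwin : CopsWin G c r) :
    k ≤ G.minDegree → Inv G c r → False := by
  induction hwin with
  | surround c r c' hmove hsur =>
    rintro hk ⟨u, hru, hfree⟩
    obtain ⟨i, hi⟩ := hsur u hru
    rcases hmove i with h | h
    · exact (hfree i).1 (h.symm.trans hi)
    · exact (hfree i).2 (hi ▸ h).symm
  | step c r c' hmove hnext ih =>
    intro hk hInv
    obtain ⟨r', h1, h2, h3⟩ := maintain h7 hδ hk hInv hmove
    exact ih r' h1 h2 hk h3

/-- With at most `minDegree` cops there is an undominated vertex. -/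
lemma exists_undominated (h7 : (7:ℕ∞) ≤ G.egirth) (hδ : 3 ≤ G.minDegree) {k : ℕ}
    (hk : k ≤ G.minDegree) (c : Fin k → V) :
    ∃ u, ∀ i, c i ≠ u ∧ ¬ G.Adj u (c i) := by
  classical
  have hV : Nonempty V := by
    by_contra h
    rw [not_nonempty_iff] at h
    have : G.minDegree = 0 := by
      simp [SimpleGraph.minDegree, Finset.univ_eq_empty]
    omega
  by_contra hno
  push_neg at hno
  -- hno : ∀ u, ∃ i, c i = u ∨ G.Adj u (c i)  (after massaging)
  have hdom : ∀ u : V, ∃ i, c i = u ∨ G.Adj u (c i) := by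
    intro u
    obtain ⟨i, hi⟩ := hno u
    by_cases h : c i = u
    · exact ⟨i, Or.inl h⟩
    · exact ⟨i, Or.inr (hi h)⟩
  obtain ⟨i₀, _⟩ := hdom (Classical.arbitrary V)
  set S : Finset V := Finset.image c Finset.univ with hS
  set d₁ : V := c i₀ with hd₁
  have hd₁S : d₁ ∈ S := Finset.mem_image.mpr ⟨i₀, Finset.mem_univ _, rfl⟩
  have hScard : S.card ≤ k := (Finset.card_image_le).trans (by simp)
  -- a neighbour of d₁ outside S
  have hu₁ : ∃ u₁ ∈ G.neighborFinset d₁, u₁ ∉ S := by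
    by_contra h
    push_neg at h
    have hsub : G.neighborFinset d₁ ⊆ S.erase d₁ := by
      intro v hv
      exact Finset.mem_erase.mpr ⟨(G.ne_of_adj (by rwa [mem_neighborFinset] at hv)).symm, h v hv⟩
    have := Finset.card_le_card hsub
    rw [card_neighborFinset_eq_degree, Finset.card_erase_of_mem hd₁S] at this
    have := G.minDegree_le_degree d₁
    omega
  obtain ⟨u₁, hu₁mem, hu₁S⟩ := hu₁
  have hd₁u₁ : G.Adj d₁ u₁ := by rwa [mem_neighborFinset] at hu₁mem
  set Y : Finset V := (G.neighborFinset u₁).erase d₁ with hY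
  have hYmem : ∀ y ∈ Y, G.Adj u₁ y ∧ y ≠ d₁ := by
    intro y hy
    rw [hY, Finset.mem_erase, mem_neighborFinset] at hy
    exact ⟨hy.2, hy.1⟩
  have hYcard : Y.card = G.degree u₁ - 1 := by
    rw [hY, Finset.card_erase_of_mem (by rw [mem_neighborFinset]; exact hd₁u₁.symm),
      card_neighborFinset_eq_degree]
  set φ : V → V := fun y => c (hdom y).choose with hφ
  have hφspec : ∀ y : V, φ y = y ∨ G.Adj y (φ y) := fun y => (hdom y).choose_spec
  have hφS : ∀ y : V, φ y ∈ S := fun y => Finset.mem_image.mpr ⟨_, Finset.mem_univ _, rfl⟩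
  have hφd₁ : ∀ y ∈ Y, φ y ≠ d₁ := by
    intro y hy h
    rcases hφspec y with h' | h'
    · exact (hYmem y hy).2 (h'.symm.trans h)
    · exact noC3 h7 hd₁u₁ (hYmem y hy).1 (h ▸ h')
  have hφinj : Set.InjOn φ ↑Y := by
    intro y₁ h₁ y₂ h₂ he
    by_contra hne
    have s₁ := hφspec y₁
    have s₂ := hφspec y₂
    rw [← he] at s₂
    exact collideXX h7 (hYmem y₁ h₁).1 (hYmem y₂ h₂).1 hne
      (fun h => hu₁S (h ▸ hφS y₁)) s₁ s₂
  have himg : Y.image φ = S.erase d₁ := by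
    apply Finset.eq_of_subset_of_card_le
    · intro q hq
      obtain ⟨y, hy, rfl⟩ := Finset.mem_image.mp hq
      exact Finset.mem_erase.mpr ⟨hφd₁ y hy, hφS y⟩
    · rw [Finset.card_image_of_injOn hφinj, hYcard, Finset.card_erase_of_mem hd₁S]
      have := G.minDegree_le_degree u₁
      omega
  have hu₂ex : ((G.neighborFinset d₁).erase u₁).Nonempty := by
    rw [← Finset.card_pos, Finset.card_erase_of_mem hu₁mem, card_neighborFinset_eq_degree]
    have := G.minDegree_le_degree d₁
    omega
  obtain ⟨u₂, hu₂mem⟩ := hu₂ex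
  rw [Finset.mem_erase, mem_neighborFinset] at hu₂mem
  obtain ⟨hu₂u₁, hd₁u₂⟩ := hu₂mem
  have hu₁u₂ : u₁ ≠ u₂ := fun hh => hu₂u₁ hh.symm
  have hu₂S : u₂ ∉ S := by
    intro h
    have h' : u₂ ∈ S.erase d₁ := Finset.mem_erase.mpr ⟨hd₁u₂.ne', h⟩
    rw [← himg] at h'
    obtain ⟨y, hy, hyq⟩ := Finset.mem_image.mp h'
    rcases hφspec y with h'' | h''
    · have : G.Adj u₁ u₂ := (h''.symm.trans hyq) ▸ (hYmem y hy).1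
      exact noC3 h7 hd₁u₁ this hd₁u₂.symm
    · exact noC4 h7 hd₁u₁ (hYmem y hy).1 (hyq ▸ h'') hd₁u₂.symm (hYmem y hy).2.symm hu₁u₂
  have hy'ex : ((G.neighborFinset u₂).erase d₁).Nonempty := by
    rw [← Finset.card_pos, Finset.card_erase_of_mem
      (by rw [mem_neighborFinset]; exact hd₁u₂.symm), card_neighborFinset_eq_degree]
    have := G.minDegree_le_degree u₂
    omega
  obtain ⟨y', hy'mem⟩ := hy'ex
  rw [Finset.mem_erase, mem_neighborFinset] at hy'mem
  obtain ⟨hy'd₁, hu₂y'⟩ := hy'mem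
  by_cases hqd : φ y' = d₁
  · rcases hφspec y' with h | h
    · exact hy'd₁ (h.symm.trans hqd)
    · exact noC3 h7 hd₁u₂ hu₂y' (hqd ▸ h)
  · have h' : φ y' ∈ S.erase d₁ := Finset.mem_erase.mpr ⟨hqd, hφS y'⟩
    rw [← himg] at h'
    obtain ⟨y, hy, hyq⟩ := Finset.mem_image.mp h'
    refine collideAA (p := φ y') h7 hd₁u₁ hd₁u₂ hu₁u₂
      (Or.inr ⟨y, (hYmem y hy).1, (hYmem y hy).2, ?_⟩)
      (Or.inr ⟨y', hu₂y', hy'd₁, ?_⟩)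
    · rw [← hyq]
      exact hφspec y
    · exact hφspec y'

lemma start (h7 : (7:ℕ∞) ≤ G.egirth) (hδ : 3 ≤ G.minDegree) {k : ℕ}
    (hk : k ≤ G.minDegree) (c : Fin k → V) :
    ∃ r, (∀ i, c i ≠ r) ∧ Inv G c r := by
  obtain ⟨u, hu⟩ := exists_undominated h7 hδ hk c
  have hdeg : 0 < G.degree u := lt_of_lt_of_le (by omega) (G.minDegree_le_degree u)
  have hne : (G.neighborFinset u).Nonempty := by
    rw [← Finset.card_pos, card_neighborFinset_eq_degree]
    exact hdeg
  obtain ⟨r, hr⟩ := hne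
  rw [mem_neighborFinset] at hr
  refine ⟨r, ?_, ⟨u, hr.symm, hu⟩⟩
  intro i h
  exact (hu i).2 (by rw [h]; exact hr)

lemma not_winWith (h7 : (7:ℕ∞) ≤ G.egirth) (hδ : 3 ≤ G.minDegree) {k : ℕ}
    (hk : k ≤ G.minDegree) : ¬ CopsWinWith G k := by
  rintro ⟨c, hc⟩
  obtain ⟨r, hleg, hInv⟩ := start h7 hδ hk c
  exact robber_escapes h7 hδ (hc r hleg) hk hInv

lemma winWith_card : CopsWinWith G (Fintype.card V) := by
  classical
  refine ⟨fun i => (Fintype.equivFin V).symm i, fun r hr => ?_⟩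
  exact absurd (by simp : (Fintype.equivFin V).symm ((Fintype.equivFin V) r) = r)
    (hr ((Fintype.equivFin V) r))

end SurroundProof

open SurroundGame

/-- If `G` has girth at least `7` and minimum degree `δ ≥ 3`, then
`σ(G) ≥ δ + 1`. -/
theorem surroundNumber_girth {V : Type*} [Fintype V] (G : SimpleGraph V)
    [DecidableRel G.Adj]
    (hgirth : (7 : ℕ∞) ≤ G.egirth) (hdeg : 3 ≤ G.minDegree) :
    G.minDegree + 1 ≤ surroundNumber G := by
  classical
  have hSne : {k | CopsWinWith G k}.Nonempty := ⟨Fintype.card V, SurroundProof.winWith_card⟩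
  have hmem := Nat.sInf_mem hSne
  by_contra h
  push_neg at h
  rw [surroundNumber] at h
  exact SurroundProof.not_winWith hgirth hdeg (Nat.lt_succ_iff.mp h) hmem
end

section
/- For every integer n ≥ 3, the surrounding cop number of the line graph of the complete graph K_n equals 2(n − 2). -/
open SurroundGame

namespace SurroundProofAux

open SimpleGraph Set

variable {n : ℕ}

abbrev EV (n : ℕ) := (⊤ : SimpleGraph (Fin n)).edgeSet

lemma mem_edge {a b : Fin n} (h : a ≠ b) : s(a, b) ∈ (⊤ : SimpleGraph (Fin n)).edgeSet := by
  rw [SimpleGraph.mem_edgeSet]; exact h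

def mkE (a b : Fin n) (h : a ≠ b) : EV n := ⟨s(a, b), mem_edge h⟩

@[simp] lemma mkE_val {a b : Fin n} (h : a ≠ b) : (mkE a b h : Sym2 (Fin n)) = s(a, b) := rfl

lemma rep (e : EV n) : ∃ (a b : Fin n) (h : a ≠ b), e = mkE a b h := by
  obtain ⟨e, he⟩ := e
  induction e using Sym2.ind with
  | _ a b =>
    have h : a ≠ b := by simpa using he
    exact ⟨a, b, h, rfl⟩

lemma adj_mkE {a b : Fin n} (h : a ≠ b) (f : EV n) :
    (⊤ : SimpleGraph (Fin n)).lineGraph.Adj (mkE a b h) f ↔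
      ∃ w, w ≠ a ∧ w ≠ b ∧
        ((f : Sym2 (Fin n)) = s(a, w) ∨ (f : Sym2 (Fin n)) = s(b, w)) := by
  rw [lineGraph_adj_iff_exists]
  constructor
  · rintro ⟨hne, v, hv1, hv2⟩
    obtain ⟨c, d, hcd, rfl⟩ := rep f
    have hne' : s(a, b) ≠ s(c, d) := fun hh => hne (Subtype.ext hh)
    simp only [mkE_val, Sym2.mem_iff] at hv1 hv2
    simp only [mkE_val, Sym2.eq_iff]
    rcases hv1 with rfl | rfl
    · rcases hv2 with rfl | rfl
      · exact ⟨d, Ne.symm hcd, fun hdb => hne' (by rw [hdb]), Or.inl (Or.inl ⟨rfl, rfl⟩)⟩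
      · exact ⟨c, hcd, fun hcb => hne' (by rw [hcb]; exact Sym2.eq_swap),
          Or.inl (Or.inr ⟨rfl, rfl⟩)⟩
    · rcases hv2 with rfl | rfl
      · exact ⟨d, fun hda => hne' (by rw [hda]; exact Sym2.eq_swap), Ne.symm hcd,
          Or.inr (Or.inl ⟨rfl, rfl⟩)⟩
      · exact ⟨c, fun hca => hne' (by rw [hca]), hcd, Or.inr (Or.inr ⟨rfl, rfl⟩)⟩
  · rintro ⟨w, hwa, hwb, hf | hf⟩
    · refine ⟨fun hh => ?_, a, by simp, by rw [hf]; simp⟩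
      rw [Subtype.ext_iff, mkE_val, hf, Sym2.eq_iff] at hh
      rcases hh with ⟨-, hbw⟩ | ⟨haw, -⟩
      · exact hwb hbw.symm
      · exact hwa haw.symm
    · refine ⟨fun hh => ?_, b, by simp, by rw [hf]; simp⟩
      rw [Subtype.ext_iff, mkE_val, hf, Sym2.eq_iff] at hh
      rcases hh with ⟨hab, -⟩ | ⟨haw, -⟩
      · exact h hab
      · exact hwa haw.symm


lemma ncard_adj_mkE {a b : Fin n} (h : a ≠ b) :
    {f : EV n | (⊤ : SimpleGraph (Fin n)).lineGraph.Adj (mkE a b h) f}.ncard = 2 * (n - 2) := by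
  classical
  set N : Set (EV n) := {f | (⊤ : SimpleGraph (Fin n)).lineGraph.Adj (mkE a b h) f} with hN
  set T : Set (Fin n) := ({a, b} : Set (Fin n))ᶜ with hT
  have hTcard : T.ncard = n - 2 := by
    have h1 := Set.ncard_add_ncard_compl ({a, b} : Set (Fin n))
    rw [Set.ncard_pair h, Nat.card_eq_fintype_card, Fintype.card_fin, ← hT] at h1
    omega
  have hmemT : ∀ x : Fin n, x ∈ T ↔ x ≠ a ∧ x ≠ b := by
    intro x; simp [hT]
  set A : Set (Sym2 (Fin n)) := (fun x => s(a, x)) '' T with hA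
  set B : Set (Sym2 (Fin n)) := (fun x => s(b, x)) '' T with hB
  have himg : Subtype.val '' N = A ∪ B := by
    ext y
    constructor
    · rintro ⟨f, hf, rfl⟩
      rw [hN, Set.mem_setOf_eq, adj_mkE] at hf
      obtain ⟨w, hwa, hwb, hf | hf⟩ := hf
      · exact Or.inl ⟨w, (hmemT w).2 ⟨hwa, hwb⟩, hf.symm⟩
      · exact Or.inr ⟨w, (hmemT w).2 ⟨hwa, hwb⟩, hf.symm⟩
    · rintro (⟨x, hx, rfl⟩ | ⟨x, hx, rfl⟩)
      · obtain ⟨hxa, hxb⟩ := (hmemT x).1 hx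
        refine ⟨mkE a x (Ne.symm hxa), ?_, rfl⟩
        rw [hN, Set.mem_setOf_eq, adj_mkE]
        exact ⟨x, hxa, hxb, Or.inl rfl⟩
      · obtain ⟨hxa, hxb⟩ := (hmemT x).1 hx
        refine ⟨mkE b x (Ne.symm hxb), ?_, rfl⟩
        rw [hN, Set.mem_setOf_eq, adj_mkE]
        exact ⟨x, hxa, hxb, Or.inr rfl⟩
  have hAcard : A.ncard = n - 2 := by
    rw [hA, Set.ncard_image_of_injOn, hTcard]
    intro x hx y hy hxy
    rw [Sym2.eq_iff] at hxy
    rcases hxy with ⟨-, hh⟩ | ⟨h1, h2⟩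
    · exact hh
    · exact h2.trans h1
  have hBcard : B.ncard = n - 2 := by
    rw [hB, Set.ncard_image_of_injOn, hTcard]
    intro x hx y hy hxy
    rw [Sym2.eq_iff] at hxy
    rcases hxy with ⟨-, hh⟩ | ⟨h1, h2⟩
    · exact hh
    · exact h2.trans h1
  have hdisj : Disjoint A B := by
    rw [Set.disjoint_left]
    rintro y ⟨x, hx, rfl⟩ ⟨x', hx', he⟩
    rw [Sym2.eq_iff] at he
    rcases he with ⟨hab, -⟩ | ⟨hbx, -⟩
    · exact h hab.symm
    · exact ((hmemT x).1 hx).2 hbx.symm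
  have : N.ncard = (Subtype.val '' N).ncard :=
    (Set.ncard_image_of_injective N Subtype.val_injective).symm
  rw [this, himg, Set.ncard_union_eq hdisj (Set.toFinite A) (Set.toFinite B), hAcard, hBcard]
  omega

lemma ncard_adj (e : EV n) :
    {f : EV n | (⊤ : SimpleGraph (Fin n)).lineGraph.Adj e f}.ncard = 2 * (n - 2) := by
  obtain ⟨a, b, h, rfl⟩ := rep e
  exact ncard_adj_mkE h


open SurroundGame in
lemma ncard_range_le {α : Type*} {m : ℕ} (c : Fin m → α) : (Set.range c).ncard ≤ m := by
  rw [← Set.image_univ]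
  calc (c '' Set.univ).ncard ≤ (Set.univ : Set (Fin m)).ncard :=
        Set.ncard_image_le (Set.toFinite _)
    _ = m := by rw [Set.ncard_univ, Nat.card_eq_fintype_card, Fintype.card_fin]

open SurroundGame in
lemma no_win : ∀ {k : ℕ} (c : Fin k → EV n) (r : EV n),
    CopsWin (⊤ : SimpleGraph (Fin n)).lineGraph c r → k < 2 * (n - 2) → False := by
  intro k c r h
  induction h with
  | surround c r c' hmove hsur =>
    intro hk
    have hsub : {f : EV n | (⊤ : SimpleGraph (Fin n)).lineGraph.Adj r f} ⊆ Set.range c' :=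
      fun f hf => hsur f hf
    have h1 := Set.ncard_le_ncard hsub (Set.toFinite _)
    rw [ncard_adj] at h1
    have h2 := ncard_range_le c'
    omega
  | step c r c' hmove hnext ih =>
    intro hk
    have hlt : ¬ ({f : EV n | (⊤ : SimpleGraph (Fin n)).lineGraph.Adj r f} ⊆ Set.range c') := by
      intro hsub
      have h1 := Set.ncard_le_ncard hsub (Set.toFinite _)
      rw [ncard_adj] at h1
      have h2 := ncard_range_le c'
      omega
    obtain ⟨f, hf, hnf⟩ := Set.not_subset.1 hlt
    exact ih f (Or.inr hf) (fun i hi => hnf ⟨i, hi⟩) hk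

lemma adj_val {a b : Fin n} (h : a ≠ b) (e f : EV n) (he : (e : Sym2 (Fin n)) = s(a, b)) :
    (⊤ : SimpleGraph (Fin n)).lineGraph.Adj e f ↔
      ∃ w, w ≠ a ∧ w ≠ b ∧
        ((f : Sym2 (Fin n)) = s(a, w) ∨ (f : Sym2 (Fin n)) = s(b, w)) := by
  have : e = mkE a b h := Subtype.ext he
  subst this
  exact adj_mkE h f

lemma mkE_congr {a b a' b' : Fin n} (h : a ≠ b) (h' : a' ≠ b') (ha : a = a') (hb : b = b') :
    mkE a b h = mkE a' b' h' := Subtype.ext (by rw [mkE_val, mkE_val, ha, hb])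

section Upper

variable (hn : 3 ≤ n)

def v0 : Fin n := ⟨0, by omega⟩
def v1 : Fin n := ⟨1, by omega⟩

lemma v0_ne_v1 : v0 hn ≠ v1 hn := by
  intro h
  have := congrArg Fin.val h
  simp [v0, v1] at this

def emb (j : Fin (n - 2)) : Fin n := ⟨j.val + 2, by have := j.isLt; omega⟩

lemma emb_ne_v0 (j : Fin (n - 2)) : emb hn j ≠ v0 hn := by
  intro h
  have := congrArg Fin.val h
  simp [emb, v0] at this

lemma emb_ne_v1 (j : Fin (n - 2)) : emb hn j ≠ v1 hn := by
  intro h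
  have := congrArg Fin.val h
  simp [emb, v1] at this

lemma emb_surj (x : Fin n) (hx0 : x ≠ v0 hn) (hx1 : x ≠ v1 hn) :
    ∃ j : Fin (n - 2), emb hn j = x := by
  have hx0' : x.val ≠ 0 := fun h => hx0 (Fin.ext h)
  have hx1' : x.val ≠ 1 := fun h => hx1 (Fin.ext h)
  have hlt := x.isLt
  refine ⟨⟨x.val - 2, by omega⟩, Fin.ext ?_⟩
  simp [emb]
  omega

def cop0 (j : Fin (n - 2)) : EV n := mkE (v0 hn) (emb hn j) (Ne.symm (emb_ne_v0 hn j))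
def cop1 (j : Fin (n - 2)) : EV n := mkE (v1 hn) (emb hn j) (Ne.symm (emb_ne_v1 hn j))

def glue (f g : Fin (n - 2) → EV n) : Fin (2 * (n - 2)) → EV n := fun i =>
  if h : (i : ℕ) < n - 2 then f ⟨i, h⟩ else g ⟨(i : ℕ) - (n - 2), by have := i.isLt; omega⟩

lemma glue_lo (f g : Fin (n - 2) → EV n) (j : Fin (n - 2)) (hj : (j : ℕ) < 2 * (n - 2)) :
    glue f g ⟨j.val, hj⟩ = f j := by
  simp only [glue, dif_pos j.isLt]

lemma glue_hi (f g : Fin (n - 2) → EV n) (j : Fin (n - 2))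
    (hj : n - 2 + (j : ℕ) < 2 * (n - 2)) :
    glue f g ⟨n - 2 + j.val, hj⟩ = g j := by
  have h1 : ¬ ((n - 2 + j.val : ℕ) < n - 2) := by omega
  simp only [glue, dif_neg h1]
  congr 1
  exact Fin.ext (by simp)

def copInit : Fin (2 * (n - 2)) → EV n := glue (cop0 hn) (cop1 hn)

lemma cop_on (p x : Fin n) (hp : p = v0 hn ∨ p = v1 hn) (hx0 : x ≠ v0 hn)
    (hx1 : x ≠ v1 hn) (hpx : p ≠ x) : ∃ i, copInit hn i = mkE p x hpx := by
  obtain ⟨j, hj⟩ := emb_surj hn x hx0 hx1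
  have hjlt := j.isLt
  rcases hp with rfl | rfl
  · refine ⟨⟨j.val, by omega⟩, ?_⟩
    rw [copInit, glue_lo]
    exact mkE_congr _ _ rfl hj
  · refine ⟨⟨n - 2 + j.val, by omega⟩, ?_⟩
    rw [copInit, glue_hi]
    exact mkE_congr _ _ rfl hj

variable {a b : Fin n}

def resp0 (ha0 : a ≠ v0 hn) (hb0 : b ≠ v0 hn) (j : Fin (n - 2)) : EV n :=
  if h : emb hn j = a then mkE (v0 hn) a (Ne.symm ha0)
  else if h2 : emb hn j = b then mkE (v0 hn) b (Ne.symm hb0)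
  else mkE a (emb hn j) (Ne.symm h)

def resp1 (ha1 : a ≠ v1 hn) (hb1 : b ≠ v1 hn) (j : Fin (n - 2)) : EV n :=
  if h : emb hn j = a then mkE (v1 hn) a (Ne.symm ha1)
  else if h2 : emb hn j = b then mkE (v1 hn) b (Ne.symm hb1)
  else mkE b (emb hn j) (Ne.symm h2)

lemma copsMove_resp (ha0 : a ≠ v0 hn) (ha1 : a ≠ v1 hn) (hb0 : b ≠ v0 hn) (hb1 : b ≠ v1 hn) :
    CopsMove (⊤ : SimpleGraph (Fin n)).lineGraph (copInit hn)
      (glue (resp0 hn ha0 hb0) (resp1 hn ha1 hb1)) := by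
  intro i
  by_cases h : (i : ℕ) < n - 2
  · have e1 : copInit hn i = cop0 hn ⟨i, h⟩ := by simp only [copInit, glue, dif_pos h]
    have e2 : glue (resp0 hn ha0 hb0) (resp1 hn ha1 hb1) i = resp0 hn ha0 hb0 ⟨i, h⟩ := by
      simp only [glue, dif_pos h]
    rw [e1, e2]
    set j : Fin (n - 2) := ⟨i, h⟩
    by_cases h1 : emb hn j = a
    · left; rw [resp0, dif_pos h1]; exact mkE_congr _ _ rfl h1.symm
    · by_cases h2 : emb hn j = b
      · left; rw [resp0, dif_neg h1, dif_pos h2]; exact mkE_congr _ _ rfl h2.symm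
      · right
        rw [resp0, dif_neg h1, dif_neg h2, cop0, lineGraph_adj_iff_exists]
        refine ⟨?_, ⟨emb hn j, by simp [mkE_val], by simp [mkE_val]⟩⟩
        intro heq
        rw [Subtype.ext_iff, mkE_val, mkE_val, Sym2.eq_iff] at heq
        rcases heq with ⟨h3, -⟩ | ⟨h3, -⟩
        · exact ha0 h3.symm
        · exact emb_ne_v0 hn j h3.symm
  · have e1 : copInit hn i = cop1 hn ⟨(i : ℕ) - (n - 2), by have := i.isLt; omega⟩ := by
      simp only [copInit, glue, dif_neg h]
    have e2 : glue (resp0 hn ha0 hb0) (resp1 hn ha1 hb1) i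
        = resp1 hn ha1 hb1 ⟨(i : ℕ) - (n - 2), by have := i.isLt; omega⟩ := by
      simp only [glue, dif_neg h]
    rw [e1, e2]
    set j : Fin (n - 2) := ⟨(i : ℕ) - (n - 2), by have := i.isLt; omega⟩
    by_cases h1 : emb hn j = a
    · left; rw [resp1, dif_pos h1]; exact mkE_congr _ _ rfl h1.symm
    · by_cases h2 : emb hn j = b
      · left; rw [resp1, dif_neg h1, dif_pos h2]; exact mkE_congr _ _ rfl h2.symm
      · right
        rw [resp1, dif_neg h1, dif_neg h2, cop1, lineGraph_adj_iff_exists]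
        refine ⟨?_, ⟨emb hn j, by simp [mkE_val], by simp [mkE_val]⟩⟩
        intro heq
        rw [Subtype.ext_iff, mkE_val, mkE_val, Sym2.eq_iff] at heq
        rcases heq with ⟨h3, -⟩ | ⟨h3, -⟩
        · exact hb1 h3.symm
        · exact emb_ne_v1 hn j h3.symm

lemma surround_resp (hab : a ≠ b) (ha0 : a ≠ v0 hn) (ha1 : a ≠ v1 hn)
    (hb0 : b ≠ v0 hn) (hb1 : b ≠ v1 hn) :
    Surrounded (⊤ : SimpleGraph (Fin n)).lineGraph
      (glue (resp0 hn ha0 hb0) (resp1 hn ha1 hb1)) (mkE a b hab) := by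
  intro w hw
  rw [adj_mkE] at hw
  obtain ⟨t, hta, htb, hval | hval⟩ := hw
  · rcases eq_or_ne t (v0 hn) with rfl | ht0
    · obtain ⟨j, hj⟩ := emb_surj hn a ha0 ha1
      have hjlt := j.isLt
      refine ⟨⟨j.val, by omega⟩, ?_⟩
      rw [glue_lo, resp0, dif_pos hj]
      exact Subtype.ext (by rw [mkE_val, hval]; exact Sym2.eq_swap)
    · rcases eq_or_ne t (v1 hn) with rfl | ht1
      · obtain ⟨j, hj⟩ := emb_surj hn a ha0 ha1
        have hjlt := j.isLt
        refine ⟨⟨n - 2 + j.val, by omega⟩, ?_⟩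
        rw [glue_hi, resp1, dif_pos hj]
        exact Subtype.ext (by rw [mkE_val, hval]; exact Sym2.eq_swap)
      · obtain ⟨j, hj⟩ := emb_surj hn t ht0 ht1
        have hjlt := j.isLt
        refine ⟨⟨j.val, by omega⟩, ?_⟩
        rw [glue_lo, resp0, dif_neg (by rw [hj]; exact hta), dif_neg (by rw [hj]; exact htb)]
        exact Subtype.ext (by rw [mkE_val, hval, hj])
  · rcases eq_or_ne t (v0 hn) with rfl | ht0
    · obtain ⟨j, hj⟩ := emb_surj hn b hb0 hb1
      have hjlt := j.isLt
      refine ⟨⟨j.val, by omega⟩, ?_⟩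
      rw [glue_lo, resp0, dif_neg (by rw [hj]; exact Ne.symm hab), dif_pos hj]
      exact Subtype.ext (by rw [mkE_val, hval]; exact Sym2.eq_swap)
    · rcases eq_or_ne t (v1 hn) with rfl | ht1
      · obtain ⟨j, hj⟩ := emb_surj hn b hb0 hb1
        have hjlt := j.isLt
        refine ⟨⟨n - 2 + j.val, by omega⟩, ?_⟩
        rw [glue_hi, resp1, dif_neg (by rw [hj]; exact Ne.symm hab), dif_pos hj]
        exact Subtype.ext (by rw [mkE_val, hval]; exact Sym2.eq_swap)
      · obtain ⟨j, hj⟩ := emb_surj hn t ht0 ht1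
        have hjlt := j.isLt
        refine ⟨⟨n - 2 + j.val, by omega⟩, ?_⟩
        rw [glue_hi, resp1, dif_neg (by rw [hj]; exact hta), dif_neg (by rw [hj]; exact htb)]
        exact Subtype.ext (by rw [mkE_val, hval, hj])

lemma surround_init (r : EV n) (hr : (r : Sym2 (Fin n)) = s(v0 hn, v1 hn)) :
    Surrounded (⊤ : SimpleGraph (Fin n)).lineGraph (copInit hn) r := by
  intro w hw
  rw [adj_val (v0_ne_v1 hn) r w hr] at hw
  obtain ⟨t, ht0, ht1, hval | hval⟩ := hw
  · obtain ⟨i, hi⟩ := cop_on hn (v0 hn) t (Or.inl rfl) ht0 ht1 (Ne.symm ht0)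
    exact ⟨i, hi.trans (Subtype.ext hval.symm)⟩
  · obtain ⟨i, hi⟩ := cop_on hn (v1 hn) t (Or.inr rfl) ht0 ht1 (Ne.symm ht1)
    exact ⟨i, hi.trans (Subtype.ext hval.symm)⟩

include hn in
lemma upper : CopsWinWith (⊤ : SimpleGraph (Fin n)).lineGraph (2 * (n - 2)) := by
  refine ⟨copInit hn, ?_⟩
  intro r hfree
  obtain ⟨a, b, hab, rfl⟩ := rep r
  by_cases ha0 : a = v0 hn
  · subst ha0
    by_cases hb1 : b = v1 hn
    · subst hb1
      exact CopsWin.surround _ _ (copInit hn) (fun i => Or.inl rfl) (surround_init hn _ rfl)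
    · exfalso
      obtain ⟨i, hi⟩ := cop_on hn (v0 hn) b (Or.inl rfl) (Ne.symm hab) hb1 hab
      exact hfree i hi
  · by_cases ha1 : a = v1 hn
    · subst ha1
      by_cases hb0 : b = v0 hn
      · subst hb0
        exact CopsWin.surround _ _ (copInit hn) (fun i => Or.inl rfl)
          (surround_init hn _ Sym2.eq_swap)
      · exfalso
        obtain ⟨i, hi⟩ := cop_on hn (v1 hn) b (Or.inr rfl) hb0 (Ne.symm hab) hab
        exact hfree i hi
    · by_cases hb0 : b = v0 hn
      · exfalso
        subst hb0
        obtain ⟨i, hi⟩ := cop_on hn (v0 hn) a (Or.inl rfl) ha0 ha1 (Ne.symm hab)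
        exact hfree i (hi.trans (Subtype.ext Sym2.eq_swap))
      · by_cases hb1 : b = v1 hn
        · exfalso
          subst hb1
          obtain ⟨i, hi⟩ := cop_on hn (v1 hn) a (Or.inr rfl) ha0 ha1 (Ne.symm hab)
          exact hfree i (hi.trans (Subtype.ext Sym2.eq_swap))
        · exact CopsWin.surround _ _ _ (copsMove_resp hn ha0 ha1 hb0 hb1)
            (surround_resp hn hab ha0 ha1 hb0 hb1)

end Upper

end SurroundProofAux


/-- For `n ≥ 3`, the surrounding cop number of the line graph of `K_n` is
`2(n - 2)`. -/
theorem surroundNumber_lineGraph_complete (n : ℕ) (hn : 3 ≤ n) :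
    surroundNumber (⊤ : SimpleGraph (Fin n)).lineGraph = 2 * (n - 2) := by
  have hmem : CopsWinWith (⊤ : SimpleGraph (Fin n)).lineGraph (2 * (n - 2)) :=
    SurroundProofAux.upper hn
  refine le_antisymm (Nat.sInf_le hmem) (le_csInf ⟨_, hmem⟩ ?_)
  intro k hk
  by_contra hlt
  push_neg at hlt
  obtain ⟨c, hc⟩ := hk
  have hbig : 2 * (n - 2) + 1 ≤ Nat.card (⊤ : SimpleGraph (Fin n)).edgeSet := by
    set e : SurroundProofAux.EV n :=
      SurroundProofAux.mkE (SurroundProofAux.v0 hn) (SurroundProofAux.v1 hn)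
        (SurroundProofAux.v0_ne_v1 hn) with he
    set N : Set (SurroundProofAux.EV n) :=
      {f | (⊤ : SimpleGraph (Fin n)).lineGraph.Adj e f} with hN
    have heN : e ∉ N := fun h => (⊤ : SimpleGraph (Fin n)).lineGraph.irrefl h
    have h3 : (insert e N).ncard ≤ (Set.univ : Set (SurroundProofAux.EV n)).ncard :=
      Set.ncard_le_ncard (Set.subset_univ _) (Set.toFinite _)
    rw [Set.ncard_insert_of_notMem heN (Set.toFinite _), hN, SurroundProofAux.ncard_adj,
      Set.ncard_univ] at h3
    exact h3
  have hne : Set.range c ≠ Set.univ := by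
    intro h
    have h1 := SurroundProofAux.ncard_range_le c
    rw [h, Set.ncard_univ] at h1
    omega
  obtain ⟨r, hr⟩ := Set.ne_univ_iff_exists_notMem _ |>.1 hne
  exact SurroundProofAux.no_win c r (hc r (fun i hi => hr ⟨i, hi⟩)) hlt
end

section
/- If G and H are connected graphs, then σ(G □ H) ≤ σ(G) + σ(H), where □ denotes the Cartesian product. -/
open SurroundGame

/-! Split the cops into a `G`-team of `σ(G)` cops and an `H`-team of `σ(H)` cops. The `G`-team
first walks in the `H`-direction until its `H`-coordinate equals the robber's; from then on it
copies every `H`-move of the robber and otherwise plays a winning `G`-strategy against the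
projection of the robber to `G`. The `H`-team does the same with the roles exchanged. A robber
move in `G` advances the game of the `G`-team, one in `H` that of the `H`-team and a pass both,
so eventually the robber is surrounded in both coordinates at once, i.e. in `G □ H`.
On a finite connected graph the cops can win from every position within a uniform number of
moves (walk to the winning placement first), which gives the chase a rank of the same kind. -/

namespace SurroundGame

open SimpleGraph Filter

section Moves

variable {V W : Type*} {G : SimpleGraph V} {G' : SimpleGraph W} {k : ℕ}

theorem CopsMove.refl (c : Fin k → V) : CopsMove G c c := fun _ => Or.inl rfl

theorem CopsMove.map (f : G →g G') {c c' : Fin k → V} (h : CopsMove G c c') :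
    CopsMove G' (f ∘ c) (f ∘ c') :=
  fun i => (h i).imp (congrArg f) f.map_adj

theorem RobberMove.map (f : G →g G') {r r' : V} (h : RobberMove G r r') :
    RobberMove G' (f r) (f r') :=
  h.imp (congrArg f) f.map_adj

theorem CopsMove.append {m n : ℕ} {c d : Fin m → V} {c' d' : Fin n → V}
    (h : CopsMove G c d) (h' : CopsMove G c' d') :
    CopsMove G (Fin.append c c') (Fin.append d d') :=
  (Fin.forall_fin_add _).2
    ⟨fun i => by simpa only [Fin.append_left] using h i,
      fun j => by simpa only [Fin.append_right] using h' j⟩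

theorem forall_append_ne {m n : ℕ} {c : Fin m → V} {c' : Fin n → V} {r : V} :
    (∀ i, Fin.append c c' i ≠ r) ↔ (∀ i, c i ≠ r) ∧ ∀ j, c' j ≠ r := by
  simp only [Fin.forall_fin_add, Fin.append_left, Fin.append_right]

theorem exists_step_toward (hG : G.Connected) (x z : V) :
    ∃ x', (x' = x ∨ G.Adj x x') ∧ G.dist x' z ≤ G.dist x z - 1 := by
  obtain ⟨p, hp⟩ := hG.exists_walk_length_eq_dist x z
  cases p with
  | nil => exact ⟨x, Or.inl rfl, by simp⟩
  | cons hadj q =>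
    refine ⟨_, Or.inr hadj, ?_⟩
    have := dist_le q
    rw [Walk.length_cons] at hp
    omega

end Moves

section WinIn

variable {V : Type*}

def WinIn (G : SimpleGraph V) {k : ℕ} : ℕ → (Fin k → V) → V → Prop
  | 0, _, _ => False
  | n + 1, c, r => ∃ c', CopsMove G c c' ∧
      (Surrounded G c' r ∨ ∀ r', RobberMove G r r' → (∀ i, c' i ≠ r') → WinIn G n c' r')

variable {G : SimpleGraph V} {k : ℕ}

theorem WinIn.mono {m n : ℕ} {c : Fin k → V} {r : V} (hmn : m ≤ n) (h : WinIn G m c r) :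
    WinIn G n c r := by
  induction m generalizing n c r with
  | zero => exact h.elim
  | succ m ih =>
    cases n with
    | zero => omega
    | succ n =>
      obtain ⟨c', hmove, hwin⟩ := h
      exact ⟨c', hmove, hwin.imp_right fun h r' hr hfree => ih (by omega) (h r' hr hfree)⟩

theorem CopsWin.eventually_winIn [Finite V] {c : Fin k → V} {r : V} (h : CopsWin G c r) :
    ∀ᶠ n in atTop, WinIn G n c r := by
  induction h with
  | surround c r c' hmove hsur =>
    exact eventually_atTop.2 ⟨1, fun n hn => WinIn.mono hn ⟨c', hmove, Or.inl hsur⟩⟩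
  | step c r c' hmove _ ih =>
    have hnext : ∀ᶠ n in atTop,
        ∀ r', RobberMove G r r' → (∀ i, c' i ≠ r') → WinIn G n c' r' :=
      eventually_all.2 fun r' => eventually_imp_distrib_left.2 fun hr =>
        eventually_imp_distrib_left.2 (ih r' hr)
    obtain ⟨N, hN⟩ := hnext.exists
    exact eventually_atTop.2 ⟨N + 1, fun n hn => WinIn.mono hn ⟨c', hmove, Or.inr hN⟩⟩

theorem winIn_of_dist_le (hG : G.Connected) {N : ℕ} {c₀ : Fin k → V}
    (h₀ : ∀ r, WinIn G N c₀ r) (D : ℕ) (c : Fin k → V) (hc : ∀ i, G.dist (c i) (c₀ i) ≤ D)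
    (r : V) : WinIn G (N + D) c r := by
  induction D generalizing c r with
  | zero =>
    obtain rfl : c = c₀ := funext fun i => hG.dist_eq_zero_iff.1 (Nat.le_zero.1 (hc i))
    exact h₀ r
  | succ D ih =>
    choose c' hmove hdist using fun i => exists_step_toward hG (c i) (c₀ i)
    exact ⟨c', hmove, Or.inr fun r' _ _ => ih c' (fun i => by grind) r'⟩

theorem CopsWinWith.exists_forall_winIn [Fintype V] (hG : G.Connected) (h : CopsWinWith G k) :
    ∃ N, ∀ (c : Fin k → V) r, WinIn G N c r := by
  obtain ⟨c₀, hc₀⟩ := h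
  obtain ⟨N, hN⟩ := (eventually_all.2 fun r => eventually_imp_distrib_left.2 fun hr =>
    (hc₀ r hr).eventually_winIn).exists
  have h₀ : ∀ r, WinIn G (N + 1) c₀ r := fun r => ⟨c₀, .refl c₀, Or.inr fun r' _ => hN r'⟩
  have := hG.nonempty
  exact ⟨N + 1 + G.diam, fun c => winIn_of_dist_le hG h₀ G.diam c
    (fun _ => dist_le_diam (connected_iff_ediam_ne_top.1 hG))⟩

end WinIn

section BoxProd

variable {α β : Type*} {G : SimpleGraph α} {H : SimpleGraph β} {k k₁ k₂ : ℕ}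

theorem robberMove_boxProd_iff {a a' : α} {b b' : β} :
    RobberMove (G □ H) (a, b) (a', b') ↔
      RobberMove G a a' ∧ b' = b ∨ a' = a ∧ H.Adj b b' := by
  simp only [RobberMove, boxProd_adj, Prod.mk.injEq]
  grind

theorem copsMove_boxProd_left {u u' : Fin k → α} (y : β) (h : CopsMove G u u') :
    CopsMove (G □ H) (fun i => (u i, y)) (fun i => (u' i, y)) :=
  fun i => (h i).imp (congrArg (·, y)) boxProd_adj_left.2

theorem copsMove_boxProd_right (u : Fin k → α) {y y' : β} (h : y' = y ∨ H.Adj y y') :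
    CopsMove (G □ H) (fun i => (u i, y)) (fun i => (u i, y')) :=
  fun i => h.imp (congrArg (u i, ·)) boxProd_adj_right.2

def twoTeams (u : Fin k₁ → α) (y : β) (x : α) (v : Fin k₂ → β) : Fin (k₁ + k₂) → α × β :=
  Fin.append (fun i => (u i, y)) (fun j => (x, v j))

theorem Surrounded.twoTeams {u : Fin k₁ → α} {v : Fin k₂ → β} {a : α} {b : β}
    (h₁ : Surrounded G u a) (h₂ : Surrounded H v b) :
    Surrounded (G □ H) (twoTeams u b a v) (a, b) := by
  rintro ⟨a', b'⟩ hadj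
  rcases boxProd_adj.1 hadj with ⟨hadj, rfl⟩ | ⟨hadj, rfl⟩
  · obtain ⟨i, rfl⟩ := h₁ a' hadj
    exact ⟨Fin.castAdd k₂ i, by simp [SurroundGame.twoTeams]⟩
  · obtain ⟨j, rfl⟩ := h₂ b' hadj
    exact ⟨Fin.natAdd k₁ j, by simp [SurroundGame.twoTeams]⟩

/-- A team of `k` cops standing at `(u i, y)` in `G □ H`, with the robber at `(a, b)` and to move,
has rank `ρ`. Once `y = b` the team plays its `G`-game against the projection `a` of the robber;
before that it walks towards `b`. Every `G`-game lasts at most `N` moves. -/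
inductive ShadowRank (G : SimpleGraph α) (H : SimpleGraph β) (N : ℕ)
    (u : Fin k → α) (y : β) (a : α) (b : β) : ℕ → Prop
  | surrounded (hy : y = b) (hs : Surrounded G u a) : ShadowRank G H N u y a b 0
  | playing (n : ℕ) (hy : y = b)
      (hw : ∀ a', RobberMove G a a' → (∀ i, u i ≠ a') → WinIn G n u a') :
      ShadowRank G H N u y a b n
  | chasing (hy : y ≠ b) : ShadowRank G H N u y a b (N + H.dist y b)

namespace ShadowRank

variable {N ρ : ℕ} {u : Fin k → α} {y : β} {a a' : α} {b b' : β}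

theorem of_forall_winIn (hN : ∀ (c : Fin k → α) r, WinIn G N c r) (u : Fin k → α) (y : β)
    (a : α) (b : β) : ShadowRank G H N u y a b (N + H.dist y b) := by
  by_cases hy : y = b
  · subst hy
    rw [dist_self, add_zero]
    exact playing N rfl fun a' _ _ => hN u a'
  · exact chasing hy

theorem respond_own (hH : H.Connected) (hN : ∀ (c : Fin k → α) r, WinIn G N c r)
    (hs : ShadowRank G H N u y a b ρ) (ha : RobberMove G a a')
    (hfree : ∀ i, (u i, y) ≠ (a', b)) :
    ∃ (u' : Fin k → α) (y' : β) (ρ' : ℕ),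
      CopsMove (G □ H) (fun i => (u i, y)) (fun i => (u' i, y')) ∧
      ShadowRank G H N u' y' a' b ρ' ∧ ρ' ≤ ρ ∧ (ρ' < ρ ∨ a' = a ∧ y = b ∧ Surrounded G u a) := by
  cases hs with
  | surrounded hy hs =>
    subst hy
    obtain rfl : a' = a := ha.resolve_right fun hadj => by
      obtain ⟨i, hi⟩ := hs a' hadj
      exact hfree i (by rw [hi])
    exact ⟨u, y, 0, .refl _, surrounded rfl hs, le_rfl, Or.inr ⟨rfl, rfl, hs⟩⟩
  | playing _ hy hw =>
    subst hy
    cases ρ with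
    | zero => exact (hw a' ha fun i h => hfree i (by rw [h])).elim
    | succ n =>
      obtain ⟨u', hmove, hsur | hnext⟩ := hw a' ha fun i h => hfree i (by rw [h])
      · exact ⟨u', y, 0, copsMove_boxProd_left y hmove, surrounded rfl hsur, by omega,
          Or.inl n.succ_pos⟩
      · exact ⟨u', y, n, copsMove_boxProd_left y hmove, playing n rfl hnext, by omega,
          Or.inl n.lt_succ_self⟩
  | chasing hy =>
    obtain ⟨y', hstep, hdist⟩ := exists_step_toward hH y b
    have := hH.pos_dist_of_ne hy
    exact ⟨u, y', _, copsMove_boxProd_right u hstep, of_forall_winIn hN u y' a' b, by omega,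
      Or.inl (by omega)⟩

theorem respond_shift (hH : H.Connected) (hN : ∀ (c : Fin k → α) r, WinIn G N c r)
    (hs : ShadowRank G H N u y a b ρ) (hb : H.Adj b b') :
    ∃ (u' : Fin k → α) (y' : β) (ρ' : ℕ),
      CopsMove (G □ H) (fun i => (u i, y)) (fun i => (u' i, y')) ∧
      ShadowRank G H N u' y' a b' ρ' ∧ ρ' ≤ ρ := by
  cases hs with
  | surrounded hy hs =>
    subst hy
    exact ⟨u, b', 0, copsMove_boxProd_right u (Or.inr hb), surrounded rfl hs, le_rfl⟩
  | playing _ hy hw =>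
    subst hy
    exact ⟨u, b', ρ, copsMove_boxProd_right u (Or.inr hb), playing ρ rfl hw, le_rfl⟩
  | chasing hy =>
    obtain ⟨y', hstep, hdist⟩ := exists_step_toward hH y b'
    have := hH.dist_triangle (u := y) (v := b) (w := b')
    rw [dist_eq_one_iff_adj.2 hb] at this
    exact ⟨u, y', _, copsMove_boxProd_right u hstep, of_forall_winIn hN u y' a b', by omega⟩

theorem respond (hH : H.Connected) (hN : ∀ (c : Fin k → α) r, WinIn G N c r)
    (hs : ShadowRank G H N u y a b ρ) (hm : RobberMove (G □ H) (a, b) (a', b'))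
    (hfree : ∀ i, (u i, y) ≠ (a', b')) :
    ∃ (u' : Fin k → α) (y' : β) (ρ' : ℕ),
      CopsMove (G □ H) (fun i => (u i, y)) (fun i => (u' i, y')) ∧
      ShadowRank G H N u' y' a' b' ρ' ∧ ρ' ≤ ρ ∧
      (ρ' < ρ ∨ b' ≠ b ∨ a' = a ∧ y = b ∧ Surrounded G u a) := by
  rcases robberMove_boxProd_iff.1 hm with ⟨ha, rfl⟩ | ⟨rfl, hb⟩
  · obtain ⟨u', y', ρ', hmove, hs', hle, hlt⟩ := hs.respond_own hH hN ha hfree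
    exact ⟨u', y', ρ', hmove, hs', hle, hlt.imp_right Or.inr⟩
  · obtain ⟨u', y', ρ', hmove, hs', hle⟩ := hs.respond_shift hH hN hb
    exact ⟨u', y', ρ', hmove, hs', hle, Or.inr (Or.inl hb.ne.symm)⟩

end ShadowRank

theorem copsWin_of_shadowRank (hG : G.Connected) (hH : H.Connected) {N₁ N₂ : ℕ}
    (hN₁ : ∀ (c : Fin k₁ → α) r, WinIn G N₁ c r) (hN₂ : ∀ (c : Fin k₂ → β) r, WinIn H N₂ c r)
    {u : Fin k₁ → α} {y : β} {x : α} {v : Fin k₂ → β} {a : α} {b : β} {ρ₁ ρ₂ : ℕ}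
    (hs₁ : ShadowRank G H N₁ u y a b ρ₁) (hs₂ : ShadowRank H G N₂ v x b a ρ₂)
    (p : α × β) (hm : RobberMove (G □ H) (a, b) p) (hfree : ∀ i, twoTeams u y x v i ≠ p) :
    CopsWin (G □ H) (twoTeams u y x v) p := by
  induction hρ : ρ₁ + ρ₂ using Nat.strong_induction_on generalizing u y x v a b ρ₁ ρ₂ p with
  | _ ρ ih =>
  obtain ⟨a', b'⟩ := p
  obtain ⟨hfree₁, hfree₂⟩ := forall_append_ne.1 hfree
  by_cases hsur : a' = a ∧ b' = b ∧ (y = b ∧ Surrounded G u a) ∧ (x = a ∧ Surrounded H v b)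
  · obtain ⟨rfl, rfl, ⟨rfl, h₁⟩, ⟨rfl, h₂⟩⟩ := hsur
    exact .surround _ _ _ (.refl _) (h₁.twoTeams h₂)
  obtain ⟨u', y', ρ₁', hmove₁, hs₁', hle₁, hlt₁⟩ := hs₁.respond hH hN₁ hm hfree₁
  obtain ⟨v', x', ρ₂', hmove₂, hs₂', hle₂, hlt₂⟩ :=
    hs₂.respond hG hN₂ (hm.map (boxProdComm G H).toHom) fun j h => hfree₂ j (congrArg Prod.swap h)
  -- The robber moved in at most one coordinate; the team playing there (both, on a pass) made
  -- progress unless it already surrounded the robber's projection.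
  have hdec : ρ₁' + ρ₂' < ρ := by
    have hone : a' = a ∨ b' = b := by grind [robberMove_boxProd_iff]
    by_contra
    have : ¬ ρ₁' < ρ₁ := by omega
    have : ¬ ρ₂' < ρ₂ := by omega
    tauto
  exact .step _ _ (twoTeams u' y' x' v') (hmove₁.append (hmove₂.map (boxProdComm H G).toHom))
    fun p hm hfree => ih _ hdec hs₁' hs₂' p hm hfree rfl

theorem CopsWinWith.boxProd [Fintype α] [Fintype β] (hG : G.Connected) (hH : H.Connected)
    (h₁ : CopsWinWith G k₁) (h₂ : CopsWinWith H k₂) : CopsWinWith (G □ H) (k₁ + k₂) := by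
  obtain ⟨N₁, hN₁⟩ := h₁.exists_forall_winIn hG
  obtain ⟨N₂, hN₂⟩ := h₂.exists_forall_winIn hH
  obtain ⟨a₀⟩ := hG.nonempty
  obtain ⟨b₀⟩ := hH.nonempty
  refine ⟨twoTeams (fun _ => a₀) b₀ a₀ (fun _ => b₀), fun ⟨a, b⟩ _ => .step _ _ _ (.refl _) ?_⟩
  exact copsWin_of_shadowRank hG hH hN₁ hN₂ (.of_forall_winIn hN₁ _ _ _ _)
    (.of_forall_winIn hN₂ _ _ _ _)

end BoxProd

theorem copsWinWith_surroundNumber {V : Type*} [Fintype V] (G : SimpleGraph V) :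
    CopsWinWith G (surroundNumber G) :=
  Nat.sInf_mem (s := {k | CopsWinWith G k}) ⟨Fintype.card V, (Fintype.equivFin V).symm,
    fun r hr => (hr _ ((Fintype.equivFin V).symm_apply_apply r)).elim⟩

end SurroundGame

/-- For connected graphs, `σ(G □ H) ≤ σ(G) + σ(H)` (Cartesian product). -/
theorem surroundNumber_boxProd {α β : Type*} [Fintype α] [Fintype β]
    (G : SimpleGraph α) (H : SimpleGraph β)
    (hG : G.Connected) (hH : H.Connected) :
    surroundNumber (G.boxProd H) ≤ surroundNumber G + surroundNumber H :=
  Nat.sInf_le ((copsWinWith_surroundNumber G).boxProd hG hH (copsWinWith_surroundNumber H))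
end

section
/- For every n ≥ 1, σ(K_{1,n} ⊠ K_{1,n}) ≥ n + 1, where ⊠ denotes the strong product; in particular the surrounding cop number of the strong product of two stars can be arbitrarily larger than σ(K_{1,n}) = 1. -/
open SurroundGame

/-- The star `K_{1,n}`: centre `none` adjacent to the `n` leaves. -/
def starGraph (n : ℕ) : SimpleGraph (Option (Fin n)) :=
  SimpleGraph.fromRel (fun x _ => x = none)

/-- The strong product `G ⊠ H`. -/
def strongProd {α β : Type*} (G : SimpleGraph α) (H : SimpleGraph β) :
    SimpleGraph (α × β) :=
  SimpleGraph.fromRel (fun x y =>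
    (x.1 = y.1 ∨ G.Adj x.1 y.1) ∧ (x.2 = y.2 ∨ H.Adj x.2 y.2))


section Aux

/-- Pigeonhole: `k` cops cannot cover a finset of more than `k` vertices. -/
lemma avoid_of_card_lt {V : Type*} [DecidableEq V] {k : ℕ} (F : Finset V)
    (hF : k < F.card) (c : Fin k → V) : ∃ w ∈ F, ∀ i, c i ≠ w := by
  by_contra h
  push_neg at h
  have hsub : F ⊆ Finset.image c Finset.univ := by
    intro w hw
    obtain ⟨i, hi⟩ := h w hw
    exact Finset.mem_image.2 ⟨i, Finset.mem_univ i, hi⟩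
  have := (Finset.card_le_card hsub).trans Finset.card_image_le
  simp at this
  omega

lemma sadj {n : ℕ} {p q : Option (Fin n) × Option (Fin n)} (hne : p ≠ q)
    (h1 : p.1 = q.1 ∨ p.1 = none ∨ q.1 = none)
    (h2 : p.2 = q.2 ∨ p.2 = none ∨ q.2 = none) :
    (strongProd (starGraph n) (starGraph n)).Adj p q := by
  simp only [strongProd, starGraph, SimpleGraph.fromRel_adj]
  refine ⟨hne, Or.inl ⟨?_, ?_⟩⟩
  · rcases eq_or_ne p.1 q.1 with h | h
    · exact Or.inl h
    · exact Or.inr (by simp only [SimpleGraph.fromRel_adj, ne_eq]; tauto)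
  · rcases eq_or_ne p.2 q.2 with h | h
    · exact Or.inl h
    · exact Or.inr (by simp only [SimpleGraph.fromRel_adj, ne_eq]; tauto)

/-- From any cross vertex, the robber has an unoccupied adjacent cross vertex. -/
lemma escape {n : ℕ} (hn : 1 ≤ n) {k : ℕ} (hk : k ≤ n)
    (r : Option (Fin n) × Option (Fin n)) (hr : r.1 = none ∨ r.2 = none)
    (c : Fin k → Option (Fin n) × Option (Fin n)) :
    ∃ w, (w.1 = none ∨ w.2 = none) ∧
      (strongProd (starGraph n) (starGraph n)).Adj r w ∧ ∀ i, c i ≠ w := by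
  obtain ⟨x, y⟩ := r
  have himcard1 :
      (Finset.image (fun b : Fin n => ((none : Option (Fin n)), (some b : Option (Fin n))))
        Finset.univ).card = n := by
    rw [Finset.card_image_of_injective _ (fun a b h => by simpa using h), Finset.card_univ,
      Fintype.card_fin]
  have himcard2 :
      (Finset.image (fun a : Fin n => ((some a : Option (Fin n)), (none : Option (Fin n))))
        Finset.univ).card = n := by
    rw [Finset.card_image_of_injective _ (fun a b h => by simpa using h), Finset.card_univ,
      Fintype.card_fin]
  cases y with
  | none =>
    cases x with
    | none =>
      set F := insert ((some ⟨0, hn⟩ : Option (Fin n)), (none : Option (Fin n)))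
        (Finset.image (fun b : Fin n => ((none : Option (Fin n)), (some b : Option (Fin n))))
          Finset.univ) with hF
      have hnot : ((some ⟨0, hn⟩ : Option (Fin n)), (none : Option (Fin n))) ∉
          Finset.image (fun b : Fin n => ((none : Option (Fin n)), (some b : Option (Fin n))))
            Finset.univ := by simp
      have hcard : k < F.card := by
        rw [hF, Finset.card_insert_of_notMem hnot, himcard1]; omega
      obtain ⟨w, hwF, hwfree⟩ := avoid_of_card_lt F hcard c
      rcases Finset.mem_insert.1 hwF with hw | hw
      · subst hw
        exact ⟨((some ⟨0, hn⟩ : Option (Fin n)), (none : Option (Fin n))), Or.inr rfl,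
          sadj (by simp) (Or.inr (Or.inl rfl)) (Or.inl rfl), hwfree⟩
      · obtain ⟨b, -, hb⟩ := Finset.mem_image.1 hw
        subst hb
        exact ⟨((none : Option (Fin n)), (some b : Option (Fin n))), Or.inl rfl,
          sadj (by simp) (Or.inl rfl) (Or.inr (Or.inl rfl)), hwfree⟩
    | some a =>
      set F := insert ((none : Option (Fin n)), (none : Option (Fin n)))
        (Finset.image (fun b : Fin n => ((none : Option (Fin n)), (some b : Option (Fin n))))
          Finset.univ) with hF
      have hnot : ((none : Option (Fin n)), (none : Option (Fin n))) ∉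
          Finset.image (fun b : Fin n => ((none : Option (Fin n)), (some b : Option (Fin n))))
            Finset.univ := by simp
      have hcard : k < F.card := by
        rw [hF, Finset.card_insert_of_notMem hnot, himcard1]; omega
      obtain ⟨w, hwF, hwfree⟩ := avoid_of_card_lt F hcard c
      rcases Finset.mem_insert.1 hwF with hw | hw
      · subst hw
        exact ⟨((none : Option (Fin n)), (none : Option (Fin n))), Or.inl rfl,
          sadj (by simp) (Or.inr (Or.inr rfl)) (Or.inl rfl), hwfree⟩
      · obtain ⟨b, -, hb⟩ := Finset.mem_image.1 hw
        subst hb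
        exact ⟨((none : Option (Fin n)), (some b : Option (Fin n))), Or.inl rfl,
          sadj (by simp) (Or.inr (Or.inr rfl)) (Or.inr (Or.inl rfl)), hwfree⟩
  | some b0 =>
    have hx : x = none := by
      rcases hr with h | h
      · exact h
      · exact absurd h (by simp)
    subst hx
    set F := insert ((none : Option (Fin n)), (none : Option (Fin n)))
      (Finset.image (fun a : Fin n => ((some a : Option (Fin n)), (none : Option (Fin n))))
        Finset.univ) with hF
    have hnot : ((none : Option (Fin n)), (none : Option (Fin n))) ∉
        Finset.image (fun a : Fin n => ((some a : Option (Fin n)), (none : Option (Fin n))))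
          Finset.univ := by simp
    have hcard : k < F.card := by
      rw [hF, Finset.card_insert_of_notMem hnot, himcard2]; omega
    obtain ⟨w, hwF, hwfree⟩ := avoid_of_card_lt F hcard c
    rcases Finset.mem_insert.1 hwF with hw | hw
    · subst hw
      exact ⟨((none : Option (Fin n)), (none : Option (Fin n))), Or.inl rfl,
        sadj (by simp) (Or.inl rfl) (Or.inr (Or.inr rfl)), hwfree⟩
    · obtain ⟨a, -, ha⟩ := Finset.mem_image.1 hw
      subst ha
      exact ⟨((some a : Option (Fin n)), (none : Option (Fin n))), Or.inr rfl,
        sadj (by simp) (Or.inr (Or.inl rfl)) (Or.inr (Or.inr rfl)), hwfree⟩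

/-- At most `n` cops cannot beat a robber sitting on the cross. -/
lemma no_win {n : ℕ} (hn : 1 ≤ n) {k : ℕ}
    {c : Fin k → Option (Fin n) × Option (Fin n)} {r : Option (Fin n) × Option (Fin n)}
    (h : CopsWin (strongProd (starGraph n) (starGraph n)) c r) :
    k ≤ n → (r.1 = none ∨ r.2 = none) → False := by
  induction h with
  | surround c r c' hmove hsur =>
    intro hk hr
    obtain ⟨w, hwS, hadj, hfree⟩ := escape hn hk r hr c'
    obtain ⟨i, hi⟩ := hsur w hadj
    exact hfree i hi
  | step c r c' hmove hnext IH =>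
    intro hk hr
    obtain ⟨w, hwS, hadj, hfree⟩ := escape hn hk r hr c'
    exact IH w (Or.inr hadj) hfree hk hwS

lemma not_copsWinWith {n : ℕ} (hn : 1 ≤ n) {k : ℕ} (hk : k ≤ n) :
    ¬ CopsWinWith (strongProd (starGraph n) (starGraph n)) k := by
  rintro ⟨c, hc⟩
  obtain ⟨w, hwS, -, hfree⟩ := escape hn hk ((some ⟨0, hn⟩ : Option (Fin n)), none)
    (Or.inr rfl) c
  exact no_win hn (hc w hfree) hk hwS

lemma copsWinWith_card (n : ℕ) :
    CopsWinWith (strongProd (starGraph n) (starGraph n))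
      (Fintype.card (Option (Fin n) × Option (Fin n))) := by
  refine ⟨(Fintype.equivFin _).symm, fun r hr => ?_⟩
  exact absurd (Equiv.symm_apply_apply _ r) (hr (Fintype.equivFin _ r))

end Aux

/-- For `n ≥ 1`, `σ(K_{1,n} ⊠ K_{1,n}) ≥ n + 1`. -/
theorem surroundNumber_strongProd_star (n : ℕ) (hn : 1 ≤ n) :
    n + 1 ≤ surroundNumber (strongProd (starGraph n) (starGraph n)) := by
  refine le_csInf ⟨_, copsWinWith_card n⟩ ?_
  intro k hk
  by_contra h
  push_neg at h
  exact not_copsWinWith hn (by omega) hk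
end
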